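/- arXiv:1408.2286 — 8 statements merged into one kernel-verified Lean document; each statement's English description precedes it below -/
import Mathlib

section
/- Let T be a tree ordering on ℕ such that (a) T is finitely branching, (b) for all m, n, if m ⪰ n then m ≥ n (as natural numbers), and (c) for all n, n ⪰ p where p is the immediate predecessor of n+1 in T. Then T has exactly one path X, and if X is enumerated as λ = x₀ ≺ x₁ ≺ x₂ ≺ ⋯ with x_{i+1} the successor of x_i, then x_n = max{m : ht(m) ≤ n}. -/
/-- `m` is an immediate successor of `n` with respect to the tree order `pr`. -/
def ImmSucc (pr : ℕ → ℕ → Prop) (n m : ℕ) : Prop :=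
  pr n m ∧ n ≠ m ∧ ∀ k, pr n k → pr k m → k = n ∨ k = m

/-- The height of node `n`: the number of strict predecessors of `n`. -/
noncomputable def ht (pr : ℕ → ℕ → Prop) (n : ℕ) : ℕ := {m | pr m n ∧ m ≠ n}.ncard

/-- A tree ordering on ℕ which is (a) finitely branching, (b) satisfies
m ⪰ n → m ≥ n, and (c) n ⪰ (immediate predecessor of n+1), has exactly one path X,
and the element of X of height n is max{m : ht(m) ≤ n}. -/
theorem stmt2 (pr : ℕ → ℕ → Prop)
    (hrefl : ∀ n, pr n n) (hanti : ∀ n m, pr n m → pr m n → n = m)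
    (htrans : ∀ n m k, pr n m → pr m k → pr n k)
    (hroot : ∃ ρ, ∀ n, pr ρ n)
    (hdownfin : ∀ n, {m | pr m n}.Finite)
    (hdownchain : ∀ n a b, pr a n → pr b n → pr a b ∨ pr b a)
    (ha : ∀ n, {m | ImmSucc pr n m}.Finite)
    (hb : ∀ m n, pr n m → n ≤ m)
    (hc : ∀ n p, ImmSucc pr p (n + 1) → pr p n) :
    ∃ P : Set ℕ, (P.Infinite ∧ IsMaxChain pr P) ∧
      (∀ Q : Set ℕ, Q.Infinite → IsMaxChain pr Q → Q = P) ∧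
      ∀ n, ∃ x ∈ P, ht pr x = n ∧ ∀ m, ht pr m ≤ n → m ≤ x := by
  classical
  obtain ⟨ρ, hρ⟩ := hroot
  have hρ0 : ρ = 0 := Nat.le_zero.mp (hb 0 ρ (hρ 0))
  have h0 : ∀ n, pr 0 n := hρ0 ▸ hρ
  -- every strict successor is above an immediate successor
  have hmin : ∀ m k, pr m k → m ≠ k → ∃ s, ImmSucc pr m s ∧ pr s k := by
    intro m k hmk hne
    have hSne : ∃ t, pr m t ∧ pr t k ∧ t ≠ m := ⟨k, hmk, hrefl k, fun h => hne h.symm⟩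
    set s := Nat.find hSne with hs
    obtain ⟨hms, hsk, hsm⟩ := Nat.find_spec hSne
    have hcomp : ∀ t, pr m t → pr t k → t ≠ m → pr s t := by
      intro t hmt htk htm
      rcases hdownchain k s t hsk htk with h | h
      · exact h
      · have : t = s := le_antisymm (hb s t h) (Nat.find_min' hSne ⟨hmt, htk, htm⟩)
        exact this ▸ hrefl s
    refine ⟨s, ⟨hms, fun h => hsm h.symm, ?_⟩, hsk⟩
    intro t hmt hts
    by_cases htm : t = m
    · exact Or.inl htm
    · exact Or.inr (hanti t s hts (hcomp t hmt (htrans t s k hts hsk) htm))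
  -- key step: any strict predecessor of n+1 is a predecessor of n
  have step : ∀ n m, pr m (n + 1) → m ≠ n + 1 → pr m n := by
    intro n m hm hne
    set S : Set ℕ := {t | pr t (n + 1) ∧ t ≠ n + 1} with hSdef
    have hSfin : S.Finite := (hdownfin (n + 1)).subset fun t ht => ht.1
    have h0S : (0 : ℕ) ∈ S := ⟨h0 (n + 1), by omega⟩
    set F := hSfin.toFinset with hF
    have hFne : F.Nonempty := ⟨0, hSfin.mem_toFinset.mpr h0S⟩
    set p := F.max' hFne with hp
    have hpS : p ∈ S := hSfin.mem_toFinset.mp (F.max'_mem hFne)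
    have hple : ∀ t ∈ S, t ≤ p := fun t ht => F.le_max' t (hSfin.mem_toFinset.mpr ht)
    have hcomp : ∀ t ∈ S, pr t p := by
      intro t ht
      rcases hdownchain (n + 1) p t hpS.1 ht.1 with h | h
      · have : p = t := le_antisymm (hb t p h) (hple t ht)
        exact this ▸ hrefl p
      · exact h
    have himm : ImmSucc pr p (n + 1) := by
      refine ⟨hpS.1, hpS.2, ?_⟩
      intro k hpk hk1
      by_cases hk : k = n + 1
      · exact Or.inr hk
      · exact Or.inl (hanti k p (hcomp k ⟨hk1, hk⟩) hpk)
    exact htrans m p n (hcomp m ⟨hm, hne⟩) (hc n p himm)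
  -- descending along the naturals
  have descend : ∀ m n k, m ≤ n → n ≤ k → pr m k → pr m n := by
    intro m n k
    induction k with
    | zero => intro hmn hnk h; have : n = 0 := Nat.le_zero.mp hnk; exact this ▸ h
    | succ k ih =>
      intro hmn hnk h
      by_cases hnk1 : n = k + 1
      · exact hnk1 ▸ h
      · exact ih hmn (by omega) (step k m h (by omega))
  set P : Set ℕ := {m | ∀ n, m ≤ n → pr m n} with hPdef
  have hP0 : (0 : ℕ) ∈ P := fun n _ => h0 n
  -- infinite up-set implies membership in P
  have upinf : ∀ x, {k | pr x k}.Infinite → x ∈ P := by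
    intro x hinf n hxn
    obtain ⟨k, hk, hnk⟩ := hinf.exists_gt n
    exact descend x n k hxn (le_of_lt hnk) hk
  -- each member of P has a strictly larger member of P
  have next : ∀ x ∈ P, ∃ y ∈ P, x < y := by
    intro x hx
    have hcover : Set.Ioi x ⊆ ⋃ s ∈ {s | ImmSucc pr x s}, {k | pr s k} := by
      intro k hk
      obtain ⟨s, hs, hsk⟩ := hmin x k (hx k (le_of_lt hk)) (by simp at hk; omega)
      exact Set.mem_biUnion hs hsk
    have : ∃ s ∈ {s | ImmSucc pr x s}, {k | pr s k}.Infinite := by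
      by_contra hcon
      push_neg at hcon
      have hfin : (⋃ s ∈ {s | ImmSucc pr x s}, {k | pr s k}).Finite :=
        Set.Finite.biUnion (ha x) fun s hs => hcon s hs
      exact (Set.Ioi_infinite x) (hfin.subset hcover)
    obtain ⟨s, hs, hsinf⟩ := this
    exact ⟨s, upinf s hsinf, lt_of_le_of_ne (hb s x hs.1) hs.2.1⟩
  have Pinf : P.Infinite := by
    have grow : ∀ N, ∃ m ∈ P, N ≤ m := by
      intro N
      induction N with
      | zero => exact ⟨0, hP0, le_refl 0⟩
      | succ N ih =>
        obtain ⟨m, hm, hNm⟩ := ih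
        obtain ⟨y, hy, hmy⟩ := next m hm
        exact ⟨y, hy, by omega⟩
    apply Set.infinite_of_not_bddAbove
    rintro ⟨b, hbub⟩
    obtain ⟨m, hm, hbm⟩ := grow (b + 1)
    exact absurd (hbub hm) (by omega)
  have Pchain : IsChain pr P := by
    intro a ha' b hb' hne
    rcases le_total a b with h | h
    · exact Or.inl (ha' b h)
    · exact Or.inr (hb' a h)
  -- an element comparable with infinitely many members of an infinite set of
  -- pr-successors is in P; applied to chains extending P and to infinite chains
  have tailinf : ∀ (R : Set ℕ), R.Infinite → ∀ x, (R \ Set.Iic x) ⊆ {k | pr x k} →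
      x ∈ P := by
    intro R hR x hsub
    exact upinf x (Set.Infinite.mono hsub (hR.diff (Set.finite_Iic x)))
  have chainmem : ∀ Q : Set ℕ, IsChain pr Q → P ⊆ Q → ∀ x ∈ Q, x ∈ P := by
    intro Q hQ hPQ x hx
    apply tailinf P Pinf x
    intro k hk
    have hkP : k ∈ P := hk.1
    have hxk : x < k := by
      have := hk.2
      simp only [Set.mem_Iic, not_le] at this
      exact this
    rcases hQ hx (hPQ hkP) (by omega) with h' | h'
    · exact h'
    · exact absurd (hb x k h') (by omega)
  have Pmax : IsMaxChain pr P :=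
    ⟨Pchain, fun Q hQ hPQ => (Set.Subset.antisymm hPQ
      (fun x hx => chainmem Q hQ hPQ x hx)).symm ▸ rfl⟩
  have uniq : ∀ Q : Set ℕ, Q.Infinite → IsMaxChain pr Q → Q = P := by
    intro Q hQinf hQmax
    have hQP : Q ⊆ P := by
      intro x hx
      apply tailinf Q hQinf x
      intro k hk
      have hxk : x < k := by
        have := hk.2
        simp only [Set.mem_Iic, not_le] at this
        exact this
      rcases hQmax.1 hx hk.1 (by omega) with h' | h'
      · exact h'
      · exact absurd (hb x k h') (by omega)
    exact (hQmax.2 Pchain hQP).symm ▸ rfl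
  -- P is downward closed
  have downcl : ∀ x ∈ P, ∀ m, pr m x → m ∈ P := by
    intro x hx m hmx n hmn
    rcases le_total n x with h | h
    · exact descend m n x hmn h hmx
    · exact htrans m x n hmx (hx n h)
  -- predecessors of an element of P are exactly the smaller elements of P
  have Dx : ∀ x ∈ P, {m | pr m x ∧ m ≠ x} = {m | m ∈ P ∧ m < x} := by
    intro x hx
    ext m
    constructor
    · rintro ⟨h1, h2⟩
      exact ⟨downcl x hx m h1, lt_of_le_of_ne (hb x m h1) h2⟩
    · rintro ⟨h1, h2⟩
      exact ⟨h1 x (le_of_lt h2), by omega⟩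
  have Pbelow_fin : ∀ x : ℕ, {m | m ∈ P ∧ m < x}.Finite := fun x =>
    (Set.finite_Iio x).subset fun m hm => hm.2
  -- the main induction producing the element of height n
  have main : ∀ n, ∃ x ∈ P, ht pr x = n ∧ ∀ m, ht pr m ≤ n → m ≤ x := by
    intro n
    induction n with
    | zero =>
      refine ⟨0, hP0, ?_, ?_⟩
      · have : {m | pr m 0 ∧ m ≠ 0} = ∅ := by
          ext m
          simp only [Set.mem_setOf_eq, Set.mem_empty_iff_false, iff_false, not_and]
          intro h1
          have := hb 0 m h1
          omega
        rw [ht, this, Set.ncard_empty]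
      · intro m hm
        by_contra hm0
        have hmem : (0 : ℕ) ∈ {k | pr k m ∧ k ≠ m} := ⟨h0 m, by omega⟩
        have hfin : {k | pr k m ∧ k ≠ m}.Finite := (hdownfin m).subset fun k hk => hk.1
        have : 0 < ht pr m := (Set.ncard_pos hfin).mpr ⟨0, hmem⟩
        omega
    | succ n ih =>
      obtain ⟨x, hxP, hhtx, hmaxx⟩ := ih
      have hcard : {m | m ∈ P ∧ m < x}.ncard = n := by
        rw [ht, Dx x hxP] at hhtx; exact hhtx
      obtain ⟨y, hy, hxy⟩ := next x hxP
      have hSne : ∃ t, t ∈ P ∧ x < t := ⟨y, hy, hxy⟩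
      set x' := Nat.find hSne with hx'def
      obtain ⟨hx'P, hxx'⟩ := Nat.find_spec hSne
      have hx'min : ∀ t, t ∈ P → x < t → x' ≤ t := fun t h1 h2 =>
        Nat.find_min' hSne ⟨h1, h2⟩
      -- the set below x' is the set below x plus x itself
      have hins : {m | m ∈ P ∧ m < x'} = insert x {m | m ∈ P ∧ m < x} := by
        ext m
        simp only [Set.mem_setOf_eq, Set.mem_insert_iff]
        constructor
        · rintro ⟨h1, h2⟩
          rcases lt_trichotomy m x with h | h | h
          · exact Or.inr ⟨h1, h⟩
          · exact Or.inl h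
          · exact absurd (hx'min m h1 h) (by omega)
        · rintro (rfl | ⟨h1, h2⟩)
          · exact ⟨hxP, hxx'⟩
          · exact ⟨h1, by omega⟩
      have hcard' : {m | m ∈ P ∧ m < x'}.ncard = n + 1 := by
        rw [hins, Set.ncard_insert_of_notMem (fun h => by
          simp only [Set.mem_setOf_eq] at h; omega) (Pbelow_fin x), hcard]
      refine ⟨x', hx'P, ?_, ?_⟩
      · rw [ht, Dx x' hx'P]; exact hcard'
      · intro m hm
        by_contra hmx'
        push_neg at hmx'
        -- all elements of P up to x' are strict predecessors of m
        have hsub : {p | p ∈ P ∧ p ≤ x'} ⊆ {k | pr k m ∧ k ≠ m} := by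
          rintro p ⟨h1, h2⟩
          exact ⟨h1 m (by omega), by omega⟩
        have hle : {p | p ∈ P ∧ p ≤ x'} = insert x' {m | m ∈ P ∧ m < x'} := by
          ext p
          simp only [Set.mem_setOf_eq, Set.mem_insert_iff]
          constructor
          · rintro ⟨h1, h2⟩
            rcases eq_or_lt_of_le h2 with h | h
            · exact Or.inl h
            · exact Or.inr ⟨h1, h⟩
          · rintro (rfl | ⟨h1, h2⟩)
            · exact ⟨hx'P, le_refl _⟩
            · exact ⟨h1, by omega⟩
        have hcard'' : {p | p ∈ P ∧ p ≤ x'}.ncard = n + 2 := by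
          rw [hle, Set.ncard_insert_of_notMem (fun h => by
            simp only [Set.mem_setOf_eq] at h; omega) (Pbelow_fin x'), hcard']
        have hfin : {k | pr k m ∧ k ≠ m}.Finite := (hdownfin m).subset fun k hk => hk.1
        have := Set.ncard_le_ncard hsub hfin
        rw [hcard''] at this
        rw [ht] at hm
        omega
  exact ⟨P, ⟨Pinf, Pmax⟩, uniq, main⟩
end

section
/- Under the hypotheses of the previous lemma (tree ordering on ℕ with properties (a), (b), (c)), for every n, the node x_n = max{m : ht(m) ≤ n} satisfies: for all l ≥ x_n, l ⪰ x_n. Consequently each x_n is an infinite node and x_n is the unique infinite node of height n. -/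
lemma ht_lt (pr : ℕ → ℕ → Prop) (hanti : ∀ n m, pr n m → pr m n → n = m)
    (htrans : ∀ n m k, pr n m → pr m k → pr n k)
    (hdownfin : ∀ n, {m | pr m n}.Finite)
    {a b : ℕ} (hab : pr a b) (hne : a ≠ b) : ht pr a < ht pr b := by
  have hfin : {m | pr m b ∧ m ≠ b}.Finite := (hdownfin b).subset (fun q hq => hq.1)
  apply Set.ncard_lt_ncard ?_ hfin
  constructor
  · rintro q ⟨hq, hqa⟩
    refine ⟨htrans _ _ _ hq hab, ?_⟩
    rintro rfl
    exact hne (hanti _ _ hab hq)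
  · intro hsub
    exact ((hsub ⟨hab, hne⟩).2) rfl

lemma exists_immpred (pr : ℕ → ℕ → Prop)
    (hrefl : ∀ n, pr n n) (hanti : ∀ n m, pr n m → pr m n → n = m)
    (htrans : ∀ n m k, pr n m → pr m k → pr n k)
    (hdownfin : ∀ n, {m | pr m n}.Finite)
    (hdownchain : ∀ n a b, pr a n → pr b n → pr a b ∨ pr b a)
    (hb : ∀ m n, pr n m → n ≤ m)
    (hzero : ∀ k, pr 0 k)
    {m : ℕ} (hm : m ≠ 0) :
    ∃ p, ImmSucc pr p m ∧ ht pr m = ht pr p + 1 ∧ (∀ q, pr q m → q ≠ m → pr q p) := by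
  have hfin : {q | pr q m ∧ q ≠ m}.Finite := (hdownfin m).subset (fun q hq => hq.1)
  have hne : (hfin.toFinset).Nonempty := by
    refine ⟨0, ?_⟩
    simp only [Set.Finite.mem_toFinset, Set.mem_setOf_eq]
    exact ⟨hzero m, fun h => hm h.symm⟩
  set p := hfin.toFinset.max' hne with hp
  have hpP : pr p m ∧ p ≠ m := by
    have := hfin.toFinset.max'_mem hne
    simpa using this
  have hgreat : ∀ q, pr q m → q ≠ m → pr q p := by
    intro q hq hqm
    rcases hdownchain m q p hq hpP.1 with h | h
    · exact h
    · have h1 : p ≤ q := hb _ _ h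
      have h2 : q ≤ p := hfin.toFinset.le_max' q (by simpa using ⟨hq, hqm⟩)
      have : q = p := le_antisymm h2 h1
      rw [this]; exact hrefl p
  have himm : ImmSucc pr p m := by
    refine ⟨hpP.1, hpP.2, fun k hpk hkm => ?_⟩
    rcases eq_or_ne k m with rfl | hk
    · exact Or.inr rfl
    · exact Or.inl (hanti _ _ (hgreat k hkm hk) hpk)
  refine ⟨p, himm, ?_, hgreat⟩
  have hset : {q | pr q m ∧ q ≠ m} = insert p {q | pr q p ∧ q ≠ p} := by
    ext q
    simp only [Set.mem_setOf_eq, Set.mem_insert_iff]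
    constructor
    · rintro ⟨hq, hqm⟩
      rcases eq_or_ne q p with rfl | hqp
      · exact Or.inl rfl
      · exact Or.inr ⟨hgreat q hq hqm, hqp⟩
    · rintro (rfl | ⟨hq, hqp⟩)
      · exact hpP
      · refine ⟨htrans _ _ _ hq hpP.1, ?_⟩
        rintro rfl
        exact hpP.2 (hanti _ _ hpP.1 hq)
  have hfinp : {q | pr q p ∧ q ≠ p}.Finite := (hdownfin p).subset (fun q hq => hq.1)
  rw [ht, hset, Set.ncard_insert_of_notMem (by simp) hfinp]
  rfl

lemma ht_zero (pr : ℕ → ℕ → Prop) (hb : ∀ m n, pr n m → n ≤ m) : ht pr 0 = 0 := by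
  have : {m | pr m 0 ∧ m ≠ 0} = ∅ := by
    ext q; simp only [Set.mem_setOf_eq, Set.mem_empty_iff_false, iff_false, not_and]
    intro hq h; exact h (Nat.le_zero.mp (hb _ _ hq))
  rw [ht, this, Set.ncard_empty]

lemma ht_pos (pr : ℕ → ℕ → Prop) (hdownfin : ∀ n, {m | pr m n}.Finite)
    (hzero : ∀ k, pr 0 k) {m : ℕ} (hm : m ≠ 0) : 0 < ht pr m := by
  have hfin : {q | pr q m ∧ q ≠ m}.Finite := (hdownfin m).subset (fun q hq => hq.1)
  rw [ht, Set.ncard_pos hfin]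
  exact ⟨0, hzero m, fun h => hm h.symm⟩

lemma level_fin (pr : ℕ → ℕ → Prop)
    (hrefl : ∀ n, pr n n) (hanti : ∀ n m, pr n m → pr m n → n = m)
    (htrans : ∀ n m k, pr n m → pr m k → pr n k)
    (hdownfin : ∀ n, {m | pr m n}.Finite)
    (hdownchain : ∀ n a b, pr a n → pr b n → pr a b ∨ pr b a)
    (ha : ∀ n, {m | ImmSucc pr n m}.Finite)
    (hb : ∀ m n, pr n m → n ≤ m)
    (hzero : ∀ k, pr 0 k) :
    ∀ n, {m | ht pr m ≤ n}.Finite := by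
  intro n
  induction n with
  | zero =>
    refine (Set.finite_singleton 0).subset (fun m hm => ?_)
    simp only [Set.mem_setOf_eq, Nat.le_zero] at hm
    by_contra hne
    have := ht_pos pr hdownfin hzero hne; omega
  | succ n ih =>
    refine (ih.union (ih.biUnion (fun p _ => ha p))).subset (fun m hm => ?_)
    simp only [Set.mem_setOf_eq] at hm
    rcases Nat.lt_or_ge (ht pr m) (n+1) with h | h
    · exact Or.inl (Nat.lt_succ_iff.mp h)
    · have hht : ht pr m = n + 1 := le_antisymm hm h
      have hm0 : m ≠ 0 := by
        intro h0; rw [h0, ht_zero pr hb] at hht; omega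
      obtain ⟨p, himm, heq, -⟩ := exists_immpred pr hrefl hanti htrans hdownfin hdownchain hb hzero hm0
      refine Or.inr ?_
      exact Set.mem_biUnion (show ht pr p ≤ n by omega) himm

/-- Under hypotheses (a), (b), (c), for every n the node
x_n = max{m : ht(m) ≤ n} satisfies l ⪰ x_n for all l ≥ x_n; consequently x_n is an
infinite node, has height n, and is the unique infinite node of height n. -/
theorem stmt3 (pr : ℕ → ℕ → Prop)
    (hrefl : ∀ n, pr n n) (hanti : ∀ n m, pr n m → pr m n → n = m)
    (htrans : ∀ n m k, pr n m → pr m k → pr n k)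
    (hroot : ∃ ρ, ∀ n, pr ρ n)
    (hdownfin : ∀ n, {m | pr m n}.Finite)
    (hdownchain : ∀ n a b, pr a n → pr b n → pr a b ∨ pr b a)
    (ha : ∀ n, {m | ImmSucc pr n m}.Finite)
    (hb : ∀ m n, pr n m → n ≤ m)
    (hc : ∀ n p, ImmSucc pr p (n + 1) → pr p n) :
    ∀ n, ∃ x, (ht pr x ≤ n ∧ ∀ m, ht pr m ≤ n → m ≤ x) ∧
      (∀ l, x ≤ l → pr x l) ∧ {m | pr x m}.Infinite ∧ ht pr x = n ∧
      ∀ y, {m | pr y m}.Infinite → ht pr y = n → y = x := by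
  have hzero : ∀ k, pr 0 k := by
    obtain ⟨ρ, hρ⟩ := hroot
    have : ρ = 0 := Nat.le_zero.mp (hb _ _ (hρ 0))
    rwa [this] at hρ
  intro n
  have hSfin := level_fin pr hrefl hanti htrans hdownfin hdownchain ha hb hzero n
  have hSne : (hSfin.toFinset).Nonempty :=
    ⟨0, by simp [ht_zero pr hb]⟩
  set x := hSfin.toFinset.max' hSne with hxdef
  have hx : ht pr x ≤ n := by
    have := hSfin.toFinset.max'_mem hSne
    simpa using this
  have hmax : ∀ m, ht pr m ≤ n → m ≤ x := by
    intro m hm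
    exact hSfin.toFinset.le_max' m (by simpa using hm)
  have hforall : ∀ l, x ≤ l → pr x l := by
    intro l hl
    induction l, hl using Nat.le_induction with
    | base => exact hrefl x
    | succ l hl ih =>
      obtain ⟨p, himm, hht, -⟩ := exists_immpred pr hrefl hanti htrans hdownfin hdownchain
        hb hzero (show l + 1 ≠ 0 by omega)
      have hpl : pr p l := hc l p himm
      rcases hdownchain l x p ih hpl with h | h
      · exact htrans _ _ _ h himm.1
      · rcases eq_or_ne p x with rfl | hne
        · exact himm.1
        · have h1 : ht pr p < ht pr x := ht_lt pr hanti htrans hdownfin h hne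
          have h2 : l + 1 ≤ x := hmax (l+1) (by omega)
          omega
  have hinf : {m | pr x m}.Infinite :=
    (Set.Ici_infinite x).mono (fun l hl => hforall l hl)
  have hhtx : ht pr x = n := by
    by_contra hnex
    have hlt : ht pr x < n := lt_of_le_of_ne hx hnex
    have hxm : pr x (x + 1) := hforall (x+1) (by omega)
    have hCfin : {k | pr x k ∧ pr k (x+1) ∧ k ≠ x}.Finite :=
      (hdownfin (x+1)).subset (fun q hq => hq.2.1)
    have hCne : (hCfin.toFinset).Nonempty := by
      refine ⟨x+1, ?_⟩
      simp only [Set.Finite.mem_toFinset, Set.mem_setOf_eq]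
      exact ⟨hxm, hrefl _, by omega⟩
    set z := hCfin.toFinset.min' hCne with hzdef
    have hzC : pr x z ∧ pr z (x+1) ∧ z ≠ x := by
      have := hCfin.toFinset.min'_mem hCne
      simpa using this
    have hleast : ∀ k, pr x k → pr k (x+1) → k ≠ x → pr z k := by
      intro k h1 h2 h3
      rcases hdownchain (x+1) z k hzC.2.1 h2 with h | h
      · exact h
      · have : z ≤ k := hCfin.toFinset.min'_le k (by simpa using ⟨h1, h2, h3⟩)
        have : k = z := le_antisymm (hb _ _ h) this
        rw [this]; exact hrefl z
    have hset : {q | pr q z ∧ q ≠ z} = insert x {q | pr q x ∧ q ≠ x} := by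
      ext q
      simp only [Set.mem_setOf_eq, Set.mem_insert_iff]
      constructor
      · rintro ⟨hq, hqz⟩
        have hqm : pr q (x+1) := htrans _ _ _ hq hzC.2.1
        rcases eq_or_ne q x with rfl | hqx
        · exact Or.inl rfl
        · rcases hdownchain (x+1) q x hqm hxm with h | h
          · exact Or.inr ⟨h, hqx⟩
          · exact absurd (hanti _ _ hq (hleast q h hqm hqx)) hqz
      · rintro (rfl | ⟨hq, hqx⟩)
        · exact ⟨hzC.1, fun h => hzC.2.2 h.symm⟩
        · refine ⟨htrans _ _ _ hq hzC.1, ?_⟩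
          rintro rfl
          exact hzC.2.2 (hanti _ _ hzC.1 hq).symm
    have hfinx : {q | pr q x ∧ q ≠ x}.Finite := (hdownfin x).subset (fun q hq => hq.1)
    have hhz : ht pr z = ht pr x + 1 := by
      rw [ht, hset, Set.ncard_insert_of_notMem (by simp) hfinx]; rfl
    have hzle : z ≤ x := hmax z (by omega)
    have hxlez : x ≤ z := hb _ _ hzC.1
    exact hzC.2.2 (le_antisymm hzle hxlez)
  refine ⟨x, ⟨hx, hmax⟩, hforall, hinf, hhtx, ?_⟩
  intro y hyinf hyht
  have hylex : y ≤ x := hmax y (by omega)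
  obtain ⟨m, hym, hmgt⟩ : ∃ m, pr y m ∧ x < m := by
    by_contra h
    push_neg at h
    exact hyinf ((Set.finite_Iic x).subset (fun q hq => h q hq))
  have hxm : pr x m := hforall m (le_of_lt hmgt)
  rcases hdownchain m y x hym hxm with h | h
  · rcases eq_or_ne y x with rfl | hne
    · rfl
    · have := ht_lt pr hanti htrans hdownfin h hne; omega
  · rcases eq_or_ne x y with rfl | hne
    · rfl
    · have := ht_lt pr hanti htrans hdownfin h hne; omega
end

section
/- Let T ⊆ 2^{<ω} be a subtree and δ : T → T a self-embedding for which there exists a string μ₀ ∈ T with |μ₀| < |δ(μ₀)|. Then there exist k ≥ 1 and a node ξ ∈ T such that ξ is a proper initial segment of δ^k(ξ). -/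
/-- A subtree of `2^{<ω}`: a set of binary strings closed under initial segments. -/
def IsSubtree (T : Set (List Bool)) : Prop := ∀ σ ∈ T, ∀ τ : List Bool, τ <+: σ → τ ∈ T

/-- A self-embedding of a subtree of `2^{<ω}`. -/
def IsEmb (T : Set (List Bool)) (δ : List Bool → List Bool) : Prop :=
  (∀ σ ∈ T, δ σ ∈ T) ∧ ∀ σ ∈ T, ∀ τ ∈ T, (σ <+: τ ↔ δ σ <+: δ τ)

/-- If a self-embedding δ of a subtree T ⊆ 2^{<ω} strictly increases the
length of some string, then some iterate δ^k (k ≥ 1) takes some node ξ ∈ T to a proper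
extension of itself. -/
theorem stmt5 (T : Set (List Bool)) (δ : List Bool → List Bool)
    (hT : IsSubtree T) (hδ : IsEmb T δ)
    (hμ : ∃ μ ∈ T, μ.length < (δ μ).length) :
    ∃ k ≥ 1, ∃ ξ ∈ T, ξ <+: δ^[k] ξ ∧ ξ ≠ δ^[k] ξ := by
  obtain ⟨μ, hμT, hμlen⟩ := hμ
  obtain ⟨hmap, hpre⟩ := hδ
  set n := μ.length with hn
  -- δ weakly increases lengths
  have hlen : ∀ m, ∀ σ ∈ T, σ.length = m → σ.length ≤ (δ σ).length := by
    intro m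
    induction m with
    | zero => intro σ _ h; omega
    | succ m ih =>
      intro σ hσ hm
      have hd : σ.dropLast <+: σ := List.dropLast_prefix σ
      have hdT : σ.dropLast ∈ T := hT σ hσ _ hd
      have hdlen : σ.dropLast.length = m := by
        rw [List.length_dropLast, hm]
        omega

      have h1 := ih σ.dropLast hdT hdlen
      have h2 : δ σ.dropLast <+: δ σ := (hpre _ hdT _ hσ).mp hd
      have h3 : δ σ.dropLast ≠ δ σ := by
        intro h
        have hps : σ <+: σ.dropLast := (hpre _ hσ _ hdT).mpr (h ▸ List.prefix_rfl)
        have := hps.length_le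
        omega
      have h4 : (δ σ.dropLast).length < (δ σ).length :=
        lt_of_le_of_ne h2.length_le (fun h => h3 (h2.eq_of_length h))
      omega
  have hlen' : ∀ σ ∈ T, σ.length ≤ (δ σ).length := fun σ hσ => hlen σ.length σ hσ rfl
  -- iterates map T to T
  have hiterT : ∀ k, ∀ σ ∈ T, δ^[k] σ ∈ T := by
    intro k
    induction k with
    | zero => intro σ hσ; simpa using hσ
    | succ k ih =>
      intro σ hσ
      rw [Function.iterate_succ_apply]
      exact ih _ (hmap σ hσ)
  -- iterates preserve prefix on T
  have hiterpre : ∀ k, ∀ σ ∈ T, ∀ τ ∈ T, σ <+: τ → δ^[k] σ <+: δ^[k] τ := by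
    intro k
    induction k with
    | zero => intro σ _ τ _ h; simpa using h
    | succ k ih =>
      intro σ hσ τ hτ h
      rw [Function.iterate_succ_apply, Function.iterate_succ_apply]
      exact ih _ (hmap σ hσ) _ (hmap τ hτ) ((hpre σ hσ τ hτ).mp h)
  -- iterates weakly increase lengths
  have hiterlen : ∀ k, ∀ σ ∈ T, σ.length ≤ (δ^[k] σ).length := by
    intro k
    induction k with
    | zero => intro σ _; simp
    | succ k ih =>
      intro σ hσ
      rw [Function.iterate_succ_apply']
      exact le_trans (ih σ hσ) (hlen' _ (hiterT k σ hσ))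
  -- the trace of μ at level n
  set ν : ℕ → List Bool := fun j => (δ^[j] μ).take n with hνdef
  have hνlen : ∀ j, (ν j).length = n := by
    intro j
    have := hiterlen j μ hμT
    simp only [hνdef, List.length_take]
    omega
  have hνpre : ∀ j, ν j <+: δ^[j] μ := fun j => List.take_prefix _ _
  have hνT : ∀ j, ν j ∈ T := fun j => hT _ (hiterT j μ hμT) _ (hνpre j)
  -- pigeonhole: ν takes values in a finite set
  have hfin : Finite {l : List Bool // l.length = n} :=
    (List.finite_length_eq Bool n).to_subtype
  obtain ⟨x, y, hxy, hxyeq⟩ := Finite.exists_ne_map_eq_of_infinite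
    (fun j : ℕ => (⟨ν j, hνlen j⟩ : {l : List Bool // l.length = n}))
  have hxyeq' : ν x = ν y := congrArg Subtype.val hxyeq
  have hex : ∃ i, ∃ k, 1 ≤ k ∧ ν (i + k) = ν i := by
    rcases Nat.lt_or_ge x y with h | h
    · exact ⟨x, y - x, by omega, by rw [Nat.add_sub_cancel' h.le]; exact hxyeq'.symm⟩
    · have h' : y < x := lt_of_le_of_ne h (Ne.symm hxy)
      exact ⟨y, x - y, by omega, by rw [Nat.add_sub_cancel' h'.le]; exact hxyeq'⟩
  classical
  -- minimal starting point of a cycle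
  obtain ⟨k, hk1, hcyc⟩ := Nat.find_spec hex
  set i := Nat.find hex with hi
  clear_value i
  set ξ := ν i with hξ
  have hξT : ξ ∈ T := hνT i
  have hξlen : ξ.length = n := hνlen i
  -- ξ is a prefix of δ^[k] ξ
  have hmain : ξ <+: δ^[k] ξ := by
    have h1 : δ^[k] ξ <+: δ^[k + i] μ := by
      have := hiterpre k ξ hξT _ (hiterT i μ hμT) (hνpre i)
      rwa [← Function.iterate_add_apply] at this
    have h2 : ξ <+: δ^[k + i] μ := by
      have := hνpre (i + k)
      rw [hcyc] at this
      rwa [Nat.add_comm i k] at this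
    have h3 : ξ.length ≤ (δ^[k] ξ).length := by
      rw [hξlen, ← hξlen]
      exact hiterlen k ξ hξT
    exact List.prefix_of_prefix_length_le h2 h1 h3
  refine ⟨k, hk1, ξ, hξT, hmain, ?_⟩
  -- suppose δ^[k] ξ = ξ; derive a contradiction
  intro heq
  obtain ⟨k', rfl⟩ : ∃ k', k = k' + 1 := ⟨k - 1, by omega⟩
  have hlenk : (δ^[k' + 1] ξ).length = n := by rw [← heq, hξlen]
  rcases Nat.eq_zero_or_pos i with hi0 | hipos
  · -- i = 0 : ξ = μ, contradicting |δ μ| > n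
    have hξμ : ξ = μ := by
      have : ν 0 = μ := by simp [hνdef]; omega
      rw [hξ, hi0, this]
    have hmono : (δ μ).length ≤ (δ^[k' + 1] μ).length := by
      rw [Function.iterate_succ_apply]
      exact hiterlen k' (δ μ) (hmap μ hμT)
    rw [hξμ] at hlenk
    rw [hlenk] at hmono
    omega
  · -- i ≥ 1 : contradict minimality of i
    obtain ⟨i', rfl⟩ : ∃ i', i = i' + 1 := ⟨i - 1, by omega⟩
    -- lengths along the orbit of ξ are all n
    have hmono : Monotone fun j => (δ^[j] ξ).length := by
      apply monotone_nat_of_le_succ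
      intro j
      rw [Function.iterate_succ_apply']
      exact hlen' _ (hiterT j ξ hξT)
    have hlenk' : (δ^[k'] ξ).length = n := by
      have h1 : (δ^[0] ξ).length ≤ (δ^[k'] ξ).length := hmono (Nat.zero_le k')
      have h2 : (δ^[k'] ξ).length ≤ (δ^[k' + 1] ξ).length := hmono (Nat.le_succ k')
      simp only [Function.iterate_zero_apply] at h1
      omega
    -- δ^[k'] ξ = ν ((i'+1) + k')
    have hpr : δ^[k'] ξ <+: δ^[i' + 1 + k'] μ := by
      have := hiterpre k' ξ hξT _ (hiterT (i' + 1) μ hμT) (hνpre (i' + 1))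
      rw [← Function.iterate_add_apply] at this
      rwa [Nat.add_comm k' (i' + 1)] at this
    have hδk'ξ : δ^[k'] ξ = ν ((i' + 1) + k') := by
      have h2 : ν ((i' + 1) + k') <+: δ^[i' + 1 + k'] μ := hνpre ((i' + 1) + k')
      have h3 : (δ^[k'] ξ).length ≤ (ν ((i' + 1) + k')).length := by
        rw [hlenk', hνlen]
      exact (List.prefix_of_prefix_length_le hpr h2 h3).eq_of_length
        (by rw [hlenk', hνlen])
    -- ξ <+: δ (ν i')
    have hξpre : ξ <+: δ (ν i') := by
      have h1 : δ (ν i') <+: δ^[i' + 1] μ := by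
        rw [Function.iterate_succ_apply']
        exact (hpre _ (hνT i') _ (hiterT i' μ hμT)).mp (hνpre i')
      have h2 : ξ <+: δ^[i' + 1] μ := hνpre (i' + 1)
      have h3 : ξ.length ≤ (δ (ν i')).length := by
        rw [hξlen, ← hνlen i']
        exact hlen' _ (hνT i')
      exact List.prefix_of_prefix_length_le h2 h1 h3
    -- δ (ν ((i'+1)+k')) = ξ
    have hδcyc : δ (ν ((i' + 1) + k')) = ξ := by
      rw [← hδk'ξ, ← Function.iterate_succ_apply' δ k' ξ, ← heq]
    -- hence ν ((i'+1)+k') <+: ν i', so they are equal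
    have hle : ν ((i' + 1) + k') <+: ν i' := by
      apply (hpre _ (hνT ((i' + 1) + k')) _ (hνT i')).mpr
      rw [hδcyc]
      exact hξpre
    have heqν : ν (i' + (k' + 1)) = ν i' := by
      have := hle.eq_of_length (by rw [hνlen, hνlen])
      rw [← this]
      congr 1
      omega
    -- contradicts minimality of i
    have : i' < Nat.find hex := by omega
    exact Nat.find_min hex this ⟨k' + 1, by omega, heqν⟩
end

section
/- Let T ⊆ 2^{<ω} be an infinite subtree with no isolated paths, and let ι : T → T be a self-embedding for which there exists ξ ∈ T with ξ ⊊ ι(ξ). Then there exist nodes α, β₀ ∈ T such that α ⊊ β₀ ⊊ ι²(α) and β₀ is a branching node of T. -/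
/-- β is a branching node of T: both T(β*0) and T(β*1) are infinite. -/
def Branching (T : Set (List Bool)) (β : List Bool) : Prop :=
  {τ ∈ T | β ++ [false] <+: τ}.Infinite ∧ {τ ∈ T | β ++ [true] <+: τ}.Infinite

/-- T has no isolated paths: above every node with infinitely many extensions in T
there is a branching node (equivalent formulation of "no isolated paths"). -/
def NoIsolatedPaths (T : Set (List Bool)) : Prop :=
  ∀ σ ∈ T, {τ ∈ T | σ <+: τ}.Infinite → ∃ β ∈ T, σ <+: β ∧ Branching T β

/-- Divergence lemma: two incomparable binary strings have a longest common prefix γ,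
with one extending γ*b and the other γ*(¬b), and every common prefix is a prefix of γ. -/
lemma diverge : ∀ (l₁ l₂ : List Bool), ¬ l₁ <+: l₂ → ¬ l₂ <+: l₁ →
    ∃ γ b, (γ ++ [b]) <+: l₁ ∧ (γ ++ [!b]) <+: l₂ ∧
      ∀ ρ, ρ <+: l₁ → ρ <+: l₂ → ρ <+: γ
  | [], _, h, _ => absurd List.nil_prefix h
  | _ :: _, [], _, h => absurd List.nil_prefix h
  | a :: t₁, b :: t₂, h1, h2 => by
    by_cases hab : a = b
    · subst hab
      obtain ⟨γ, c, p1, p2, hl⟩ := diverge t₁ t₂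
        (fun hp => h1 (List.cons_prefix_cons.2 ⟨rfl, hp⟩))
        (fun hp => h2 (List.cons_prefix_cons.2 ⟨rfl, hp⟩))
      refine ⟨a :: γ, c, List.cons_prefix_cons.2 ⟨rfl, p1⟩,
        List.cons_prefix_cons.2 ⟨rfl, p2⟩, ?_⟩
      intro ρ hρ1 hρ2
      match ρ with
      | [] => exact List.nil_prefix
      | x :: ρ' =>
        obtain ⟨hx, hρ1'⟩ := List.cons_prefix_cons.1 hρ1
        obtain ⟨_, hρ2'⟩ := List.cons_prefix_cons.1 hρ2
        exact List.cons_prefix_cons.2 ⟨hx, hl ρ' hρ1' hρ2'⟩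
    · refine ⟨[], a, List.cons_prefix_cons.2 ⟨rfl, List.nil_prefix⟩, ?_, ?_⟩
      · have hb : (!a) = b := by
          cases a <;> cases b <;> simp_all
        rw [List.nil_append, ← hb]
        exact List.cons_prefix_cons.2 ⟨rfl, List.nil_prefix⟩
      · intro ρ hρ1 hρ2
        match ρ with
        | [] => exact List.prefix_refl _
        | x :: ρ' =>
          obtain ⟨hx, _⟩ := List.cons_prefix_cons.1 hρ1
          obtain ⟨hx', _⟩ := List.cons_prefix_cons.1 hρ2
          exact absurd (hx ▸ hx') hab

/-- If T is an infinite subtree of 2^{<ω} with no isolated paths and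
ι is a self-embedding with ξ ⊊ ι(ξ) for some ξ ∈ T, then there are nodes α, β₀ ∈ T
with α ⊊ β₀ ⊊ ι²(α) and β₀ a branching node. -/
theorem stmt6 (T : Set (List Bool)) (ι : List Bool → List Bool)
    (hT : IsSubtree T) (hinf : T.Infinite) (hni : NoIsolatedPaths T)
    (hι : IsEmb T ι)
    (ξ : List Bool) (hξ : ξ ∈ T) (h1 : ξ <+: ι ξ) (h2 : ξ ≠ ι ξ) :
    ∃ α ∈ T, ∃ β₀ ∈ T, (α <+: β₀ ∧ α ≠ β₀) ∧
      (β₀ <+: ι^[2] α ∧ β₀ ≠ ι^[2] α) ∧ Branching T β₀ := by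
  classical
  -- injectivity of ι on T
  have hinj : ∀ σ ∈ T, ∀ τ ∈ T, ι σ = ι τ → σ = τ := by
    intro σ hσ τ hτ he
    exact ((hι.2 σ hσ τ hτ).2 (he ▸ List.prefix_refl _)).eq_of_length_le
      ((hι.2 τ hτ σ hσ).2 (he ▸ List.prefix_refl _)).length_le
  -- basic facts about the iterates
  have key : ∀ n : ℕ, ι^[n] ξ ∈ T ∧ ι^[n] ξ <+: ι^[n+1] ξ ∧
      (ι^[n] ξ).length < (ι^[n+1] ξ).length := by
    intro n
    induction n with
    | zero =>
      refine ⟨hξ, h1, lt_of_le_of_ne h1.length_le ?_⟩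
      intro he; exact h2 (h1.eq_of_length he)
    | succ n ih =>
      obtain ⟨hmem, hpre, hlen⟩ := ih
      have hmem1 : ι^[n+1] ξ ∈ T := by
        rw [Function.iterate_succ_apply']; exact hι.1 _ hmem
      have hpre1 : ι^[n+1] ξ <+: ι^[n+2] ξ := by
        rw [Function.iterate_succ_apply', Function.iterate_succ_apply' ι (n+1)]
        exact (hι.2 _ hmem _ hmem1).1 hpre
      refine ⟨hmem1, hpre1, lt_of_le_of_ne hpre1.length_le ?_⟩
      intro he
      have heq : ι^[n+1] ξ = ι^[n+2] ξ := hpre1.eq_of_length he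
      have : ι^[n] ξ = ι^[n+1] ξ := by
        apply hinj _ hmem _ hmem1
        rw [← Function.iterate_succ_apply' ι n, ← Function.iterate_succ_apply' ι (n+1)]
        exact heq
      exact absurd (congrArg List.length this) (Nat.ne_of_lt hlen)
  have hmem : ∀ n, ι^[n] ξ ∈ T := fun n => (key n).1
  have hlenSM : StrictMono (fun n => (ι^[n] ξ).length) :=
    strictMono_nat_of_lt_succ (fun n => (key n).2.2)
  have hmono : ∀ m n : ℕ, m ≤ n → ι^[m] ξ <+: ι^[n] ξ := by
    intro m n h
    induction n with
    | zero => simp_all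
    | succ n ih =>
      rcases Nat.lt_or_ge m (n+1) with h' | h'
      · exact (ih (by omega)).trans (key n).2.1
      · have : m = n + 1 := by omega
        subst this; exact List.prefix_refl _
  -- the set of extensions of each iterate is infinite
  have hinfS : ∀ m : ℕ, {τ ∈ T | ι^[m] ξ <+: τ}.Infinite := by
    intro m
    refine Set.infinite_of_injective_forall_mem (f := fun n : ℕ => ι^[m+n] ξ) ?_ ?_
    · intro a b hab
      have := congrArg List.length hab
      have hSM : StrictMono fun n : ℕ => (ι^[m+n] ξ).length :=
        fun a b h => hlenSM (by omega)
      exact hSM.injective this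
    · intro n
      exact ⟨hmem _, hmono m (m+n) (by omega)⟩
  -- the key finishing step: a branching node γ with ι ξ <+: γ and γ <+: ι^[K] ξ
  -- yields the conclusion
  have finish : ∀ γ ∈ T, Branching T γ → ι ξ <+: γ → (∃ K, γ <+: ι^[K] ξ) →
      ∃ α ∈ T, ∃ β₀ ∈ T, (α <+: β₀ ∧ α ≠ β₀) ∧
        (β₀ <+: ι^[2] α ∧ β₀ ≠ ι^[2] α) ∧ Branching T β₀ := by
    intro γ hγT hγbr hιξγ hex
    set k := Nat.find hex with hkdef
    have hk : γ <+: ι^[k] ξ := Nat.find_spec hex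
    have hk1 : 1 ≤ k := by
      rcases Nat.eq_zero_or_pos k with h0 | h0
      · exfalso
        have : γ <+: ξ := by simpa [h0] using hk
        have h1' : (ξ).length < (ι^[1] ξ).length := hlenSM (by omega : (0:ℕ) < 1)
        have : (ι ξ).length ≤ ξ.length := le_trans hιξγ.length_le this.length_le
        simp at h1'
        omega
      · exact h0
    have hαT : ι^[k-1] ξ ∈ T := hmem _
    have hcomp := List.prefix_or_prefix_of_prefix (hmono (k-1) k (by omega)) hk
    have hnot : ¬ γ <+: ι^[k-1] ξ := Nat.find_min hex (by omega)
    have hαγ : ι^[k-1] ξ <+: γ := by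
      rcases hcomp with h | h
      · exact h
      · exact absurd h hnot
    have hαγne : ι^[k-1] ξ ≠ γ := by
      intro he; exact hnot (he ▸ List.prefix_refl _)
    have hι2 : ι^[2] (ι^[k-1] ξ) = ι^[k+1] ξ := by
      rw [← Function.iterate_add_apply]
      congr 1
      omega
    refine ⟨ι^[k-1] ξ, hαT, γ, hγT, ⟨hαγ, hαγne⟩, ⟨?_, ?_⟩, hγbr⟩
    · rw [hι2]; exact hk.trans (hmono k (k+1) (by omega))
    · rw [hι2]
      intro he
      have : γ.length ≤ (ι^[k] ξ).length := hk.length_le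
      have h2' : (ι^[k] ξ).length < (ι^[k+1] ξ).length := hlenSM (by omega : k < k+1)
      have := congrArg List.length he
      omega
  -- get a branching node β above ι ξ
  obtain ⟨β, hβT, hιξβ, hβbr⟩ := hni (ι ξ) (by simpa using hmem 1) (by simpa using hinfS 1)
  by_cases hcase : ∃ K, β <+: ι^[K] ξ
  · -- Case A: β is on the path
    have : ι^[1] ξ <+: β := by simpa using hιξβ
    exact finish β hβT hβbr (by simpa using this) hcase
  · -- Case B: β goes off the path; find the divergence point
    push_neg at hcase
    -- find the largest m with ι^[m] ξ <+: β
    have hQex : ∃ m : ℕ, ¬ ι^[m+1] ξ <+: β := by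
      refine ⟨β.length, fun hp => ?_⟩
      have h1' := StrictMono.le_apply hlenSM (x := β.length + 1)
      have := hp.length_le
      omega
    set m := Nat.find hQex with hmdef
    have hm1 : ¬ ι^[m+1] ξ <+: β := Nat.find_spec hQex
    have hmpos : 1 ≤ m := by
      rcases Nat.eq_zero_or_pos m with h0 | h0
      · exfalso; apply hm1; simpa [h0] using hιξβ
      · exact h0
    have hm0 : ι^[m] ξ <+: β := by
      have := Nat.find_min hQex (m := m - 1) (by omega)
      push_neg at this
      have hm : m - 1 + 1 = m := by omega
      rwa [hm] at this
    -- β and ι^[m+1] ξ are incomparable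
    obtain ⟨γ, b, hp1, hp2, hcp⟩ := diverge β (ι^[m+1] ξ) (hcase (m+1)) hm1
    have hγβ : γ <+: β := (List.prefix_append γ [b]).trans hp1
    have hγT : γ ∈ T := hT β hβT γ hγβ
    -- γ is a branching node
    have hside1 : {τ ∈ T | γ ++ [b] <+: τ}.Infinite := by
      apply Set.Infinite.mono (s := {τ ∈ T | β ++ [false] <+: τ}) ?_ hβbr.1
      intro τ ⟨hτT, hτp⟩
      exact ⟨hτT, hp1.trans ((List.prefix_append β [false]).trans hτp)⟩
    have hside2 : {τ ∈ T | γ ++ [!b] <+: τ}.Infinite := by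
      apply Set.Infinite.mono (s := {τ ∈ T | ι^[m+1] ξ <+: τ}) ?_ (hinfS (m+1))
      intro τ ⟨hτT, hτp⟩
      exact ⟨hτT, hp2.trans hτp⟩
    have hγbr : Branching T γ := by
      cases b
      · exact ⟨hside1, by simpa using hside2⟩
      · exact ⟨by simpa using hside2, hside1⟩
    -- ι ξ <+: γ
    have hmγ : ι^[m] ξ <+: γ := hcp _ hm0 (hmono m (m+1) (by omega))
    have hιξγ : ι ξ <+: γ := by
      have : ι^[1] ξ <+: ι^[m] ξ := hmono 1 m hmpos
      simpa using this.trans hmγ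
    exact finish γ hγT hγbr hιξγ ⟨m+1, (List.prefix_append γ [!b]).trans hp2⟩
end

section
/- Let T ⊆ 2^{<ω} be a subtree and ι : T → T a self-embedding such that there exist nodes α and β₀ with α ⊊ β₀ ⊊ ι(α) and β₀ a branching node of T. Then there exists a branching node β₁ of T with ι(α) ⊊ β₁ ⊊ ι²(α). -/
theorem List.IsPrefix.consc {s t : List Bool} (a : Bool) (h : s <+: t) : a :: s <+: a :: t :=
  List.cons_prefix_cons.mpr ⟨rfl, h⟩

def lcp : List Bool → List Bool → List Bool
  | a :: s, b :: t => if a = b then a :: lcp s t else []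
  | _, _ => []

theorem lcp_prefix_left : ∀ x y : List Bool, lcp x y <+: x
  | a :: s, b :: t => by
    by_cases h : a = b
    · simpa [lcp, h] using (lcp_prefix_left s t).consc a
    · simp [lcp, h]
  | [], _ => by simp [lcp]
  | a :: s, [] => by simp [lcp]

theorem lcp_prefix_right : ∀ x y : List Bool, lcp x y <+: y
  | a :: s, b :: t => by
    by_cases h : a = b
    · subst h; simpa [lcp] using (lcp_prefix_right s t).consc a
    · simp [lcp, h]
  | [], _ => by simp [lcp]
  | a :: s, [] => by simp [lcp]

theorem prefix_lcp : ∀ p x y : List Bool, p <+: x → p <+: y → p <+: lcp x y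
  | [], _, _, _, _ => by simp
  | c :: p, a :: s, b :: t, hx, hy => by
    obtain ⟨rfl, hx'⟩ := (List.cons_prefix_cons.mp hx)
    obtain ⟨rfl, hy'⟩ := (List.cons_prefix_cons.mp hy)
    simpa [lcp] using (prefix_lcp p s t hx' hy').consc c
  | c :: p, [], _, hx, _ => by simp at hx
  | c :: p, a :: s, [], _, hy => by simp at hy

theorem lcp_strict (x y : List Bool) (hxy : ¬ x <+: y) (hyx : ¬ y <+: x) :
    ∃ b : Bool, (lcp x y ++ [b] <+: x) ∧ (lcp x y ++ [!b] <+: y) := by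
  induction x generalizing y with
  | nil => exact absurd (List.nil_prefix) hxy
  | cons a s ih =>
    cases y with
    | nil => exact absurd (List.nil_prefix) hyx
    | cons b t =>
      by_cases h : a = b
      · subst h
        obtain ⟨c, hc1, hc2⟩ := ih t (fun h' => hxy (h'.consc a)) (fun h' => hyx (h'.consc a))
        exact ⟨c, by simpa [lcp] using hc1.consc a, by simpa [lcp] using hc2.consc a⟩
      · refine ⟨a, by simp [lcp, h], ?_⟩
        have : (!a) = b := by cases a <;> cases b <;> simp_all
        simp [lcp, h, this]



theorem prefix_antisymm' {p q : List Bool} (h1 : p <+: q) (h2 : q <+: p) : p = q :=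
  h1.eq_of_length (le_antisymm h1.length_le h2.length_le)

/-- If ι is a self-embedding of a subtree T ⊆ 2^{<ω} and there are α, β₀
with α ⊊ β₀ ⊊ ι(α), β₀ a branching node, then there is a branching node β₁ with
ι(α) ⊊ β₁ ⊊ ι²(α). -/
theorem stmt7 (T : Set (List Bool)) (ι : List Bool → List Bool)
    (hT : IsSubtree T) (hι : IsEmb T ι)
    (α β₀ : List Bool) (hα : α ∈ T) (hβ₀ : β₀ ∈ T)
    (h1 : α <+: β₀) (h1' : α ≠ β₀)
    (h2 : β₀ <+: ι α) (h2' : β₀ ≠ ι α)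
    (hbr : Branching T β₀) :
    ∃ β₁ ∈ T, (ι α <+: β₁ ∧ ι α ≠ β₁) ∧
      (β₁ <+: ι^[2] α ∧ β₁ ≠ ι^[2] α) ∧ Branching T β₁ := by
  have inj : ∀ σ ∈ T, ∀ τ ∈ T, ι σ = ι τ → σ = τ := by
    intro σ hσ τ hτ h
    exact prefix_antisymm' ((hι.2 σ hσ τ hτ).mpr (h ▸ List.prefix_refl _))
      ((hι.2 τ hτ σ hσ).mpr (h ▸ List.prefix_refl _))
  -- the two children of β₀ are in T
  obtain ⟨τ₀, hτ₀T, hτ₀p⟩ := hbr.1.nonempty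
  obtain ⟨τ₁, hτ₁T, hτ₁p⟩ := hbr.2.nonempty
  have hβ₀0 : β₀ ++ [false] ∈ T := hT τ₀ hτ₀T _ hτ₀p
  have hβ₀1 : β₀ ++ [true] ∈ T := hT τ₁ hτ₁T _ hτ₁p
  -- incomparability of children and their images
  have hnc : ∀ b : Bool, ¬ (β₀ ++ [b] <+: β₀ ++ [!b]) := by
    intro b h
    have := prefix_antisymm' h (h.eq_of_length (by simp) ▸ List.prefix_refl _)
    simpa using List.append_cancel_left this
  have hinc0 : ¬ ι (β₀ ++ [false]) <+: ι (β₀ ++ [true]) := by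
    intro h
    exact hnc false (by simpa using (hι.2 _ hβ₀0 _ hβ₀1).mpr h)
  have hinc1 : ¬ ι (β₀ ++ [true]) <+: ι (β₀ ++ [false]) := by
    intro h
    exact hnc true (by simpa using (hι.2 _ hβ₀1 _ hβ₀0).mpr h)
  set β₁ := lcp (ι (β₀ ++ [false])) (ι (β₀ ++ [true])) with hβ₁def
  obtain ⟨b, hb0, hb1⟩ := lcp_strict _ _ hinc0 hinc1
  have hιβ₀0T : ι (β₀ ++ [false]) ∈ T := hι.1 _ hβ₀0
  have hιβ₀1T : ι (β₀ ++ [true]) ∈ T := hι.1 _ hβ₀1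
  have hβ₁T : β₁ ∈ T := hT _ hιβ₀0T _ (lcp_prefix_left _ _)
  have hιαT : ι α ∈ T := hι.1 α hα
  -- ι α ⊊ ι β₀ <+: β₁
  have hαβ₀ : ι α <+: ι β₀ := (hι.2 α hα β₀ hβ₀).mp h1
  have hαβ₀' : ι α ≠ ι β₀ := fun h => h1' (inj α hα β₀ hβ₀ h)
  have hβ₀β₁ : ι β₀ <+: β₁ :=
    prefix_lcp _ _ _ ((hι.2 β₀ hβ₀ _ hβ₀0).mp (List.prefix_append _ _))
      ((hι.2 β₀ hβ₀ _ hβ₀1).mp (List.prefix_append _ _))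
  have hleft : ι α <+: β₁ := hαβ₀.trans hβ₀β₁
  have hleft' : ι α ≠ β₁ := by
    intro h
    exact hαβ₀' (prefix_antisymm' hαβ₀ (h ▸ hβ₀β₁))
  -- find the child of β₀ below ι α
  obtain ⟨r, hr⟩ := h2
  cases r with
  | nil => exact absurd (by simpa using hr) h2'
  | cons c r' =>
    have hcα : β₀ ++ [c] <+: ι α := ⟨r', by simpa using hr⟩
    have hcT : β₀ ++ [c] ∈ T := hT _ hιαT _ hcα
    have hit : ι^[2] α = ι (ι α) := by
      simp [Function.iterate_succ, Function.comp]
    have himg : ι (β₀ ++ [c]) <+: ι (ι α) := (hι.2 _ hcT _ hιαT).mp hcα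
    -- β₁ is a strict prefix of ι (β₀ ++ [c])
    have hstrict : β₁ <+: ι (β₀ ++ [c]) ∧ ∃ x, β₁ ++ [x] <+: ι (β₀ ++ [c]) := by
      cases c
      · exact ⟨lcp_prefix_left _ _, b, hb0⟩
      · exact ⟨lcp_prefix_right _ _, !b, hb1⟩
    have hright : β₁ <+: ι^[2] α := hit ▸ (hstrict.1.trans himg)
    have hright' : β₁ ≠ ι^[2] α := by
      obtain ⟨x, hx⟩ := hstrict.2
      intro h
      have hlen : β₁.length + 1 ≤ (ι (β₀ ++ [c])).length := by
        simpa using hx.length_le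
      have hlen2 : (ι (β₀ ++ [c])).length ≤ (ι (ι α)).length := himg.length_le
      have : (ι (ι α)).length = β₁.length := by rw [← hit, h]
      omega
    -- branching of β₁
    have key : ∀ γ ∈ T, ∀ p : List Bool, p <+: ι γ →
        {τ ∈ T | γ <+: τ}.Infinite → {τ ∈ T | p <+: τ}.Infinite := by
      intro γ hγ p hp hinf
      have himg := hinf.image (f := ι) (fun x hx y hy hxy => inj x hx.1 y hy.1 hxy)
      refine himg.mono ?_
      rintro _ ⟨τ, ⟨hτT, hτp⟩, rfl⟩
      exact ⟨hι.1 τ hτT, hp.trans ((hι.2 γ hγ τ hτT).mp hτp)⟩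
    have hbranch : Branching T β₁ := by
      constructor
      · cases b
        · exact key _ hβ₀0 _ hb0 hbr.1
        · exact key _ hβ₀1 _ (by simpa using hb1) hbr.2
      · cases b
        · exact key _ hβ₀1 _ (by simpa using hb1) hbr.2
        · exact key _ hβ₀0 _ hb0 hbr.1
    exact ⟨β₁, hβ₁T, ⟨hleft, hleft'⟩, ⟨hright, hright'⟩, hbranch⟩
end

section
/- Every infinite computable tree has either an infinite computable chain or an infinite Π⁰₁ antichain. More precisely: if (T, ⪯) is a tree with T ⊆ ℕ, T and ⪯ computable, and T infinite, then either there is a computable infinite set C ⊆ T which is linearly ordered by ⪯, or the set of leaves of T is infinite (and the leaf set {n ∈ T : ∀m (m ≻ n → false)} is a Π⁰₁ subset of T forming an antichain). -/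
/-- Every infinite computable tree has either an infinite computable
chain or an infinite Π⁰₁ antichain (the set of leaves). -/
theorem stmt9 (T : Set ℕ) (r : ℕ → ℕ → Prop)
    (hTcomp : ComputablePred (· ∈ T))
    (hrcomp : ComputablePred fun p : ℕ × ℕ => r p.1 p.2)
    (hTinf : T.Infinite)
    (hrefl : ∀ n ∈ T, r n n)
    (hantisymm : ∀ n ∈ T, ∀ m ∈ T, r n m → r m n → n = m)
    (htrans : ∀ n ∈ T, ∀ m ∈ T, ∀ k ∈ T, r n m → r m k → r n k)
    (hroot : ∃ ρ ∈ T, ∀ n ∈ T, r ρ n)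
    (hdownfin : ∀ n ∈ T, {m ∈ T | r m n}.Finite)
    (hdownchain : ∀ n ∈ T, ∀ a ∈ T, ∀ b ∈ T, r a n → r b n → r a b ∨ r b a) :
    (∃ C : Set ℕ, C ⊆ T ∧ C.Infinite ∧ ComputablePred (· ∈ C) ∧
        ∀ a ∈ C, ∀ b ∈ C, r a b ∨ r b a) ∨
    ({n ∈ T | ∀ m ∈ T, r n m → m = n}.Infinite ∧
      REPred (fun n => ¬ (n ∈ T ∧ ∀ m ∈ T, r n m → m = n)) ∧
      ∀ a ∈ {n ∈ T | ∀ m ∈ T, r n m → m = n}, ∀ b ∈ {n ∈ T | ∀ m ∈ T, r n m → m = n},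
        a ≠ b → ¬ r a b ∧ ¬ r b a) := by
  classical
  obtain ⟨χT, hχT, hTeq⟩ := ComputablePred.computable_iff.1 hTcomp
  obtain ⟨χr, hχr, hreq⟩ := ComputablePred.computable_iff.1 hrcomp
  have hT : ∀ n, n ∈ T ↔ χT n = true := fun n => by
    have := congrFun hTeq n; simp only [eq_iff_iff] at this ⊢; exact this
  have hr : ∀ n m, r n m ↔ χr (n, m) = true := fun n m => by
    have := congrFun hreq (n, m); simp only [eq_iff_iff] at this ⊢; exact this
  set Leaves : Set ℕ := {n ∈ T | ∀ m ∈ T, r n m → m = n} with hLdef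
  by_cases hL : Leaves.Infinite
  · -- antichain case
    right
    refine ⟨hL, ?_, ?_⟩
    · -- RePred
      have hqc : Computable₂ (fun n m => !χT n || (χT m && χr (n, m) && (m != n)) : ℕ → ℕ → Bool) := by
        have hcomb : Computable fun b : Bool × Bool × Bool × Bool =>
            !b.1 || (b.2.1 && b.2.2.1 && b.2.2.2) := (Primrec.or.comp (Primrec.not.comp (Primrec.fst)) (Primrec.and.comp (Primrec.and.comp (Primrec.fst.comp Primrec.snd) (Primrec.fst.comp (Primrec.snd.comp Primrec.snd))) (Primrec.snd.comp (Primrec.snd.comp Primrec.snd)))).to_comp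
        have h1 : Computable fun p : ℕ × ℕ => χT p.1 := hχT.comp Computable.fst
        have h2 : Computable fun p : ℕ × ℕ => χT p.2 := hχT.comp Computable.snd
        have h3 : Computable fun p : ℕ × ℕ => χr p := hχr
        have h4 : Computable fun p : ℕ × ℕ => (p.2 != p.1 : Bool) := by
          have := Primrec.eq.comp (Primrec.snd (α := ℕ) (β := ℕ)) Primrec.fst
          exact Primrec.to_comp (by simpa [bne] using (Primrec.not.comp (Primrec.beq.comp Primrec.snd Primrec.fst)))
        exact (hcomb.comp (h1.pair (h2.pair (h3.pair h4)))).of_eq (fun p => rfl)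
      set q : ℕ → ℕ → Bool := fun n m => !χT n || (χT m && χr (n, m) && (m != n)) with hqdef
      have key : ∀ n, (¬ (n ∈ T ∧ ∀ m ∈ T, r n m → m = n)) ↔ ∃ m, q n m = true := by
        intro n
        constructor
        · intro h
          by_cases ht : n ∈ T
          · push_neg at h
            obtain ⟨m, hm, hrm, hne⟩ := h ht
            exact ⟨m, by simp [hqdef, (hT m).1 hm, (hr n m).1 hrm, hne]⟩
          · refine ⟨0, ?_⟩
            have : χT n = false := by
              cases hc : χT n
              · rfl
              · exact absurd ((hT n).2 hc) ht
            simp [hqdef, this]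
        · rintro ⟨m, hm⟩ ⟨ht, hleaf⟩
          simp only [hqdef, Bool.or_eq_true, Bool.not_eq_true', Bool.and_eq_true, bne_iff_ne] at hm
          rcases hm with hm | ⟨⟨h1, h2⟩, h3⟩
          · exact absurd ((hT n).1 ht) (by simp [hm])
          · exact h3 (hleaf m ((hT m).2 h1) ((hr n m).2 h2))
      have hF : Partrec fun n => (Nat.rfind fun m => Part.some (q n m)).map fun _ => () := by
        refine Partrec.map (Partrec.rfind ?_) ((Computable.const ()).comp Computable.fst).to₂
        have := hqc.partrec₂
        unfold Partrec₂ at this ⊢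
        exact this.of_eq fun p => by simp [PFun.coe_val]
      refine hF.of_eq fun n => ?_
      apply Part.ext'
      · simp only [Part.map_Dom, Nat.rfind_dom, Part.assert]
        constructor
        · rintro ⟨m, hm, _⟩
          simp at hm
          exact ⟨(key n).2 ⟨m, hm⟩, trivial⟩
        · rintro ⟨h, -⟩
          obtain ⟨m, hm⟩ := (key n).1 h
          obtain ⟨k, hk, -⟩ := Nat.rfind_min' (p := fun m => q n m) hm
          exact ⟨k, by simpa using Nat.rfind_spec hk, fun {_} _ => trivial⟩
      · intros; rfl
    · -- antichain
      rintro a ⟨haT, ha⟩ b ⟨hbT, hb⟩ hne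
      exact ⟨fun hab => hne.symm (ha b hbT hab), fun hba => hne (hb a haT hba)⟩
  · -- chain case
    left
    rw [Set.not_infinite] at hL
    obtain ⟨ρ, hρT, hρ⟩ := hroot
    -- depth function
    set dep : ℕ → ℕ := fun n => Set.ncard {m ∈ T | r m n} with hdepdef
    have hdep_lt : ∀ n ∈ T, ∀ m ∈ T, r n m → n ≠ m → dep n < dep m := by
      intro n hn m hm hnm hne
      apply Set.ncard_lt_ncard
      · constructor
        · rintro x ⟨hxT, hxn⟩
          exact ⟨hxT, htrans x hxT n hn m hm hxn hnm⟩
        · intro hsub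
          have : m ∈ {m_1 ∈ T | r m_1 n} := hsub ⟨hm, hrefl m hm⟩
          exact hne (hantisymm n hn m hm hnm this.2)
      · exact hdownfin m hm
    -- every node with finite upset has a leaf above it
    have hmax : ∀ n ∈ T, ({m ∈ T | r n m}).Finite → ∃ ℓ ∈ Leaves, r n ℓ := by
      intro n hn hfin
      obtain ⟨ℓ, hℓ, hℓmax⟩ := Set.Finite.exists_maximalFor dep _ hfin ⟨n, hn, hrefl n hn⟩
      refine ⟨ℓ, ⟨hℓ.1, ?_⟩, hℓ.2⟩
      intro k hkT hℓk
      by_contra hne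
      have hk : k ∈ {m ∈ T | r n m} := ⟨hkT, htrans n hn ℓ hℓ.1 k hkT hℓ.2 hℓk⟩
      have hlt := hdep_lt ℓ hℓ.1 k hkT hℓk (fun h => hne h.symm)
      exact absurd (hℓmax hk (le_of_lt hlt)) (not_le_of_gt hlt)
    -- good nodes have good strict extensions
    have hstep : ∀ n, n ∈ T → ({m ∈ T | r n m}).Infinite →
        ∃ m, (m ∈ T ∧ ({k ∈ T | r m k}).Infinite) ∧ r n m ∧ m ≠ n := by
      intro n hn hinf
      set S : Set ℕ := {m ∈ T | r n m ∧ m ≠ n} with hSdef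
      have hSinf : S.Infinite := by
        have : {m ∈ T | r n m} \ {n} ⊆ S := by
          rintro x ⟨⟨hxT, hxr⟩, hxn⟩
          exact ⟨hxT, hxr, by simpa using hxn⟩
        exact (hinf.diff (Set.finite_singleton n)).mono this
      by_contra hno
      push_neg at hno
      have hall : ∀ m ∈ S, ({k ∈ T | r m k}).Finite := by
        intro m hm
        by_contra hbad
        exact hm.2.2 (hno m ⟨hm.1, hbad⟩ hm.2.1)
      have hSsub : S ⊆ ⋃ ℓ ∈ Leaves, {m ∈ T | r m ℓ} := by
        intro m hm
        obtain ⟨ℓ, hℓL, hmℓ⟩ := hmax m hm.1 (hall m hm)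
        exact Set.mem_biUnion hℓL ⟨hm.1, hmℓ⟩
      have : (⋃ ℓ ∈ Leaves, {m ∈ T | r m ℓ}).Finite :=
        hL.biUnion fun ℓ hℓ => hdownfin ℓ hℓ.1
      exact hSinf (this.subset hSsub)
    -- build a chain of good nodes
    have hρgood : ({m ∈ T | r ρ m}).Infinite := by
      have : {m ∈ T | r ρ m} = T := Set.ext fun m => ⟨fun h => h.1, fun h => ⟨h, hρ m h⟩⟩
      rwa [this]
    set g : ℕ → ℕ := fun k => Nat.rec ρ (fun _ ih =>
      if h : ih ∈ T ∧ ({m ∈ T | r ih m}).Infinite then Classical.choose (hstep ih h.1 h.2) else 0) k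
      with hgdef
    have hg : ∀ k, g k ∈ T ∧ ({m ∈ T | r (g k) m}).Infinite ∧
        (g (k+1) ∈ T ∧ r (g k) (g (k+1)) ∧ g (k+1) ≠ g k) := by
      have main : ∀ k, g k ∈ T ∧ ({m ∈ T | r (g k) m}).Infinite := by
        intro k
        induction k with
        | zero => exact ⟨hρT, hρgood⟩
        | succ k ih =>
          have hd : g (k+1) = Classical.choose (hstep (g k) ih.1 ih.2) := by
            show (if h : g k ∈ T ∧ _ then _ else 0) = _
            rw [dif_pos ih]
          obtain ⟨⟨h1, h2⟩, h3, h4⟩ := Classical.choose_spec (hstep (g k) ih.1 ih.2)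
          rw [hd]
          exact ⟨h1, h2⟩
      intro k
      have ih := main k
      have hd : g (k+1) = Classical.choose (hstep (g k) ih.1 ih.2) := by
        show (if h : g k ∈ T ∧ _ then _ else 0) = _
        rw [dif_pos ih]
      obtain ⟨⟨h1, h2⟩, h3, h4⟩ := Classical.choose_spec (hstep (g k) ih.1 ih.2)
      rw [hd]
      exact ⟨ih.1, ih.2, h1, h3, h4⟩
    have hginj : Function.Injective g := by
      have hsm : StrictMono (fun k => dep (g k)) := by
        apply strictMono_nat_of_lt_succ
        intro k
        obtain ⟨h1, -, h2, h3, h4⟩ := hg k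
        exact hdep_lt (g k) h1 (g (k+1)) h2 h3 (Ne.symm h4)
      intro a b hab
      exact hsm.injective (by rw [hab])
    -- pick x₀ : good node with no leaves above it
    have hD : (⋃ ℓ ∈ Leaves, {m ∈ T | r m ℓ}).Finite := hL.biUnion fun ℓ hℓ => hdownfin ℓ hℓ.1
    have : ∃ k, g k ∉ ⋃ ℓ ∈ Leaves, {m ∈ T | r m ℓ} := by
      by_contra hcon
      push_neg at hcon
      exact (Set.infinite_range_of_injective hginj) (hD.subset (Set.range_subset_iff.2 hcon))
    obtain ⟨k₀, hk₀⟩ := this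
    set x₀ : ℕ := g k₀ with hx₀def
    have hx₀T : x₀ ∈ T := (hg k₀).1
    have hx₀noleaf : ∀ n ∈ T, r x₀ n → ∃ m ∈ T, r n m ∧ m ≠ n := by
      intro n hn hx₀n
      by_contra hcon
      push_neg at hcon
      have hnL : n ∈ Leaves := ⟨hn, hcon⟩
      exact hk₀ (Set.mem_biUnion hnL ⟨hx₀T, hx₀n⟩)
    -- helper boolean lemmas
    have hpreT : ∀ x, (χT x && χr (x₀, x)) = true ↔ (x ∈ T ∧ r x₀ x) := fun x => by
      rw [Bool.and_eq_true]
      exact and_congr (hT x).symm (hr x₀ x).symm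
    have hpreF : ∀ x, (χT x && χr (x₀, x)) = false ↔ ¬ (x ∈ T ∧ r x₀ x) := fun x => by
      rw [Bool.eq_false_iff]
      exact not_congr (hpreT x)
    have hExt : ∀ x m, (χT m && χr (x, m) && (m != x)) = true ↔ (m ∈ T ∧ r x m ∧ m ≠ x) :=
      fun x m => by
        simp only [Bool.and_eq_true, bne_iff_ne, and_assoc]
        exact and_congr (hT m).symm (and_congr (hr x m).symm Iff.rfl)
    -- the computable step function
    set B : ℕ → ℕ → Bool := fun x m =>
      !(χT x && χr (x₀, x)) || (χT m && χr (x, m) && (m != x)) with hBdef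
    have hBiff : ∀ x m, B x m = true ↔
        ((χT x && χr (x₀, x)) = false ∨ (m ∈ T ∧ r x m ∧ m ≠ x)) := fun x m => by
      show (!(χT x && χr (x₀, x)) || (χT m && χr (x, m) && (m != x))) = true ↔ _
      rw [Bool.or_eq_true, Bool.not_eq_true', hExt]
    have hBc : Computable₂ B := by
      have hcomb : Computable fun b : Bool × Bool × Bool × Bool × Bool =>
          !(b.1 && b.2.1) || (b.2.2.1 && b.2.2.2.1 && b.2.2.2.2) := (Primrec.or.comp (Primrec.not.comp (Primrec.and.comp (Primrec.fst) (Primrec.fst.comp Primrec.snd))) (Primrec.and.comp (Primrec.and.comp (Primrec.fst.comp (Primrec.snd.comp Primrec.snd)) (Primrec.fst.comp (Primrec.snd.comp (Primrec.snd.comp Primrec.snd)))) (Primrec.snd.comp (Primrec.snd.comp (Primrec.snd.comp Primrec.snd))))).to_comp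
      have h1 : Computable fun p : ℕ × ℕ => χT p.1 := hχT.comp Computable.fst
      have h2 : Computable fun p : ℕ × ℕ => χr (x₀, p.1) :=
        hχr.comp ((Computable.const x₀).pair Computable.fst)
      have h3 : Computable fun p : ℕ × ℕ => χT p.2 := hχT.comp Computable.snd
      have h4 : Computable fun p : ℕ × ℕ => χr p := hχr
      have h5 : Computable fun p : ℕ × ℕ => (p.2 != p.1 : Bool) := by
        have := Primrec.eq.comp (Primrec.snd (α := ℕ) (β := ℕ)) Primrec.fst
        exact Primrec.to_comp (by simpa [bne] using (Primrec.not.comp (Primrec.beq.comp Primrec.snd Primrec.fst)))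
      exact (hcomb.comp (h1.pair (h2.pair (h3.pair (h4.pair h5))))).of_eq (fun p => rfl)
    have hBex : ∀ x, ∃ m, B x m = true := by
      intro x
      by_cases hx : x ∈ T ∧ r x₀ x
      · obtain ⟨m, hmT, hxm, hne⟩ := hx₀noleaf x hx.1 hx.2
        exact ⟨m, (hBiff x m).2 (Or.inr ⟨hmT, hxm, hne⟩)⟩
      · exact ⟨0, (hBiff x 0).2 (Or.inl ((hpreF x).2 hx))⟩
    set step : ℕ → ℕ := fun x => Nat.find (hBex x) with hstepdef
    have hstepc : Computable step := by
      have hpr : Partrec fun x => Nat.rfind fun m => Part.some (B x m) := by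
        apply Partrec.rfind
        have := hBc.partrec₂
        unfold Partrec₂ at this ⊢
        exact this.of_eq fun p => by simp [PFun.coe_val]
      apply hpr.of_eq_tot
      intro x
      apply Nat.mem_rfind.2
      constructor
      · simpa using Nat.find_spec (hBex x)
      · intro m hm
        simpa using Nat.find_min (hBex x) hm
    -- the chain function
    set c : ℕ → ℕ := fun i => Nat.rec x₀ (fun _ ih => step ih) i with hcdef
    have hcc : Computable c := by
      have hh : Computable₂ (fun (_ : ℕ) (p : ℕ × ℕ) => step p.2) :=
        (hstepc.comp (Computable.snd.comp Computable.snd)).to₂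
      have := Computable.nat_rec (Computable.id (α := ℕ)) (Computable.const x₀) hh
      exact this.of_eq fun n => rfl
    have hc0 : c 0 = x₀ := rfl
    have hcs : ∀ i, c (i+1) = step (c i) := fun i => rfl
    have hcinv : ∀ i, c i ∈ T ∧ r x₀ (c i) := by
      intro i
      induction i with
      | zero => exact ⟨hx₀T, hrefl x₀ hx₀T⟩
      | succ i ih =>
        have hspec := (hBiff _ _).1 (Nat.find_spec (hBex (c i)))
        rcases hspec with h | ⟨h1, h2, h3⟩
        · exact absurd ⟨ih.1, ih.2⟩ ((hpreF (c i)).1 h)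
        · rw [hcs i]
          exact ⟨h1, htrans x₀ hx₀T (c i) ih.1 _ h1 ih.2 h2⟩
    have hcstrict : ∀ i, r (c i) (c (i+1)) ∧ c (i+1) ≠ c i := by
      intro i
      have ih := hcinv i
      have hspec := (hBiff _ _).1 (Nat.find_spec (hBex (c i)))
      rcases hspec with h | ⟨h1, h2, h3⟩
      · exact absurd ⟨ih.1, ih.2⟩ ((hpreF (c i)).1 h)
      · exact ⟨h2, h3⟩
    have hcmono : ∀ i j, i ≤ j → r (c i) (c j) := by
      intro i j hij
      induction j with
      | zero => cases Nat.le_zero.1 hij; exact hrefl _ (hcinv 0).1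
      | succ j ihj =>
        rcases Nat.lt_or_ge i (j+1) with h | h
        · have hij' : i ≤ j := Nat.lt_succ_iff.1 h
          exact htrans _ (hcinv i).1 _ (hcinv j).1 _ (hcinv (j+1)).1 (ihj hij') (hcstrict j).1
        · have : i = j + 1 := le_antisymm hij h
          rw [this]; exact hrefl _ (hcinv (j+1)).1
    have hcinj : Function.Injective c := by
      have hsm : StrictMono (fun i => dep (c i)) := by
        apply strictMono_nat_of_lt_succ
        intro i
        exact hdep_lt (c i) (hcinv i).1 (c (i+1)) (hcinv (i+1)).1 (hcstrict i).1
          (Ne.symm (hcstrict i).2)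
      intro a b hab
      exact hsm.injective (by rw [hab])
    -- the chain set
    refine ⟨{n | n ∈ T ∧ r x₀ n ∧ ∃ i, r n (c i)}, fun n hn => hn.1, ?_, ?_, ?_⟩
    · -- infinite
      refine Set.Infinite.mono ?_ (Set.infinite_range_of_injective hcinj)
      rintro x ⟨i, rfl⟩
      exact ⟨(hcinv i).1, (hcinv i).2, i, hrefl _ (hcinv i).1⟩
    · -- computable
      set E : ℕ → ℕ → Bool := fun n i =>
        !(χT n && χr (x₀, n)) || (χr (n, c i) || !χr (c i, n)) with hEdef
      have hEiff : ∀ n i, E n i = true ↔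
          ((χT n && χr (x₀, n)) = false ∨ χr (n, c i) = true ∨ χr (c i, n) = false) :=
        fun n i => by
          show (!(χT n && χr (x₀, n)) || (χr (n, c i) || !χr (c i, n))) = true ↔ _
          rw [Bool.or_eq_true, Bool.or_eq_true, Bool.not_eq_true', Bool.not_eq_true']
      have hEc : Computable₂ E := by
        have hcomb : Computable fun b : Bool × Bool × Bool × Bool =>
            !(b.1 && b.2.1) || (b.2.2.1 || !b.2.2.2) := (Primrec.or.comp (Primrec.not.comp (Primrec.and.comp (Primrec.fst) (Primrec.fst.comp Primrec.snd))) (Primrec.or.comp (Primrec.fst.comp (Primrec.snd.comp Primrec.snd)) (Primrec.not.comp (Primrec.snd.comp (Primrec.snd.comp Primrec.snd))))).to_comp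
        have h1 : Computable fun p : ℕ × ℕ => χT p.1 := hχT.comp Computable.fst
        have h2 : Computable fun p : ℕ × ℕ => χr (x₀, p.1) :=
          hχr.comp ((Computable.const x₀).pair Computable.fst)
        have h3 : Computable fun p : ℕ × ℕ => χr (p.1, c p.2) :=
          hχr.comp (Computable.fst.pair (hcc.comp Computable.snd))
        have h4 : Computable fun p : ℕ × ℕ => χr (c p.2, p.1) :=
          hχr.comp ((hcc.comp Computable.snd).pair Computable.fst)
        exact (hcomb.comp (h1.pair (h2.pair (h3.pair h4)))).of_eq (fun p => rfl)
      have hEex : ∀ n, ∃ i, E n i = true := by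
        intro n
        by_cases hn : n ∈ T ∧ r x₀ n
        · by_contra hcon
          push_neg at hcon
          have hall : ∀ i, r (c i) n := by
            intro i
            have hne : ¬ (E n i = true) := by simpa using hcon i
            rw [hEiff] at hne
            push_neg at hne
            rcases Bool.eq_false_or_eq_true (χr (c i, n)) with h | h
            · exact (hr _ _).2 h
            · exact (hne.2.2 h).elim
          have hsub : Set.range c ⊆ {m ∈ T | r m n} := by
            rintro x ⟨i, rfl⟩
            exact ⟨(hcinv i).1, hall i⟩
          exact (Set.infinite_range_of_injective hcinj) ((hdownfin n hn.1).subset hsub)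
        · exact ⟨0, (hEiff n 0).2 (Or.inl ((hpreF n).2 hn))⟩
      set f : ℕ → Bool := fun n => χT n && χr (x₀, n) && χr (n, c (Nat.find (hEex n))) with hfdef
      have hfc : Computable f := by
        have hgc : Computable₂ fun (n i : ℕ) => χT n && χr (x₀, n) && χr (n, c i) := by
          have hcomb : Computable fun b : Bool × Bool × Bool =>
              b.1 && b.2.1 && b.2.2 := (Primrec.and.comp (Primrec.and.comp (Primrec.fst) (Primrec.fst.comp Primrec.snd)) (Primrec.snd.comp Primrec.snd)).to_comp
          have h1 : Computable fun p : ℕ × ℕ => χT p.1 := hχT.comp Computable.fst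
          have h2 : Computable fun p : ℕ × ℕ => χr (x₀, p.1) :=
            hχr.comp ((Computable.const x₀).pair Computable.fst)
          have h3 : Computable fun p : ℕ × ℕ => χr (p.1, c p.2) :=
            hχr.comp (Computable.fst.pair (hcc.comp Computable.snd))
          exact (hcomb.comp (h1.pair (h2.pair h3))).of_eq (fun p => rfl)
        have hpr : Partrec fun n => (Nat.rfind fun i => Part.some (E n i)).map
            fun i => χT n && χr (x₀, n) && χr (n, c i) := by
          refine Partrec.map (Partrec.rfind ?_) hgc
          have := hEc.partrec₂
          unfold Partrec₂ at this ⊢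
          exact this.of_eq fun p => by simp [PFun.coe_val]
        apply hpr.of_eq_tot
        intro n
        rw [Part.mem_map_iff]
        refine ⟨Nat.find (hEex n), ?_, rfl⟩
        apply Nat.mem_rfind.2
        constructor
        · simpa using Nat.find_spec (hEex n)
        · intro m hm
          simpa using Nat.find_min (hEex n) hm
      apply ComputablePred.computable_iff.2
      refine ⟨f, hfc, funext fun n => propext ?_⟩
      constructor
      · rintro ⟨hnT, hx₀n, j, hj⟩
        rw [hfdef]
        simp only [Bool.and_eq_true]
        refine ⟨⟨(hT n).1 hnT, (hr x₀ n).1 hx₀n⟩, ?_⟩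
        -- need r n (c i₀) where i₀ = Nat.find
        set i₀ := Nat.find (hEex n) with hi₀
        have hspec := (hEiff n i₀).1 (Nat.find_spec (hEex n))
        rcases hspec with h | h | h
        · exact absurd ⟨hnT, hx₀n⟩ ((hpreF n).1 h)
        · exact h
        · cases hni : χr (n, c i₀) with
          | true => rfl
          | false =>
            exfalso
            have hnc1 : ¬ r n (c i₀) := fun hc => by
              rw [(hr _ _).1 hc] at hni; simp at hni
            have hnc2 : ¬ r (c i₀) n := fun hc => by
              rw [(hr _ _).1 hc] at h; simp at h
            rcases le_or_gt j i₀ with hji | hji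
            · exact hnc1 (htrans n hnT (c j) (hcinv j).1 (c i₀) (hcinv i₀).1 hj
                (hcmono j i₀ hji))
            · rcases hdownchain (c j) (hcinv j).1 n hnT (c i₀) (hcinv i₀).1 hj
                (hcmono i₀ j (le_of_lt hji)) with h' | h'
              · exact hnc1 h'
              · exact hnc2 h'
      · intro hf
        rw [hfdef] at hf
        simp only [Bool.and_eq_true] at hf
        obtain ⟨⟨h1, h2⟩, h3⟩ := hf
        exact ⟨(hT n).2 h1, (hr x₀ n).2 h2, Nat.find (hEex n), (hr _ _).2 h3⟩
    · -- chain
      rintro a ⟨haT, -, i, hai⟩ b ⟨hbT, -, j, hbj⟩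
      set k := max i j with hk
      have hak : r a (c k) := htrans a haT (c i) (hcinv i).1 (c k) (hcinv k).1 hai (hcmono i k (le_max_left i j))
      have hbk : r b (c k) := htrans b hbT (c j) (hcinv j).1 (c k) (hcinv k).1 hbj (hcmono j k (le_max_right i j))
      exact hdownchain (c k) (hcinv k).1 a haT b hbT hak hbk
end

section
/- Let f : ℕ → ℕ be defined from a uniformly c.e. sequence (A_n) (with exactly one set receiving one element at each stage) by f(n) = the least stage s by which all finite sets among A₀,…,A_n have been completely enumerated. If b : ℕ → ℕ dominates f (b(x) ≥ f(x) for all sufficiently large x), then 0'' ≤_T b ⊕ 0'. -/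
open Classical in
/-- Characteristic function of a set of naturals. -/
noncomputable def chi (A : Set ℕ) : ℕ → ℕ := fun n => if n ∈ A then 1 else 0

/-- Join of two oracles (b ⊕ g as a single function oracle). -/
def funJoin (f g : ℕ → ℕ) : ℕ → ℕ := fun n => if n % 2 = 0 then f (n / 2) else g (n / 2)

/-- Oracle computability: `f` is partial recursive relative to the (total) oracle `O`. -/
inductive RecursiveInFn (O : ℕ → ℕ) : (ℕ →. ℕ) → Prop
  | zero : RecursiveInFn O fun _ => 0
  | succ : RecursiveInFn O Nat.succ
  | left : RecursiveInFn O fun n => (Nat.unpair n).1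
  | right : RecursiveInFn O fun n => (Nat.unpair n).2
  | oracle : RecursiveInFn O fun n => O n
  | pair {f h : ℕ →. ℕ} : RecursiveInFn O f → RecursiveInFn O h →
      RecursiveInFn O fun n => Nat.pair <$> f n <*> h n
  | comp {f h : ℕ →. ℕ} : RecursiveInFn O f → RecursiveInFn O h →
      RecursiveInFn O fun n => h n >>= f
  | prec {f h : ℕ →. ℕ} : RecursiveInFn O f → RecursiveInFn O h →
      RecursiveInFn O (Nat.unpaired fun a n =>
        n.rec (f a) fun y IH => do let i ← IH; h (Nat.pair a (Nat.pair y i)))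
  | rfind {f : ℕ →. ℕ} : RecursiveInFn O f →
      RecursiveInFn O fun a => Nat.rfind fun n => (fun m => m = 0) <$> f (Nat.pair a n)

/-- The halting problem 0'. -/
def ZeroJump : Set ℕ :=
  {n | (Nat.Partrec.Code.eval (Denumerable.ofNat Nat.Partrec.Code (Nat.unpair n).1)
        (Nat.unpair n).2).Dom}

/-- The e-th c.e. set W_e. -/
def We (e : ℕ) : Set ℕ :=
  {x | (Nat.Partrec.Code.eval (Denumerable.ofNat Nat.Partrec.Code e) x).Dom}

/-- A canonical representative of the degree 0'': the Σ⁰₂-complete set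
{e : W_e is finite}. -/
def ZeroJumpJump : Set ℕ := {e | (We e).Finite}

/-- The n-th set of the uniformly c.e. sequence given by the enumeration `enum`
(at stage s the set A_{(enum s).1} receives the element (enum s).2). -/
def Aset (enum : ℕ → ℕ × ℕ) (i : ℕ) : Set ℕ := {x | ∃ s, enum s = (i, x)}

/-! ### Auxiliary lemmas about `RecursiveInFn` -/

theorem RecursiveInFn.of_eq' {O : ℕ → ℕ} {f g : ℕ →. ℕ} (h : RecursiveInFn O f)
    (e : ∀ n, f n = g n) : RecursiveInFn O g := (funext e : f = g) ▸ h

theorem RecursiveInFn.of_partrec {O : ℕ → ℕ} {f : ℕ →. ℕ} (h : Nat.Partrec f) :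
    RecursiveInFn O f := by
  induction h with
  | zero => exact .zero
  | succ => exact .succ
  | left => exact .left
  | right => exact .right
  | pair _ _ ih₁ ih₂ => exact .pair ih₁ ih₂
  | comp _ _ ih₁ ih₂ => exact .comp ih₁ ih₂
  | prec _ _ ih₁ ih₂ => exact .prec ih₁ ih₂
  | rfind _ ih => exact .rfind ih

theorem RecursiveInFn.trans' {O O' : ℕ → ℕ} {F : ℕ →. ℕ} (h : RecursiveInFn O F)
    (hO : RecursiveInFn O' (fun n => Part.some (O n))) : RecursiveInFn O' F := by
  induction h with
  | zero => exact .zero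
  | succ => exact .succ
  | left => exact .left
  | right => exact .right
  | oracle => exact hO
  | pair _ _ ih₁ ih₂ => exact .pair ih₁ ih₂
  | comp _ _ ih₁ ih₂ => exact .comp ih₁ ih₂
  | prec _ _ ih₁ ih₂ => exact .prec ih₁ ih₂
  | rfind _ ih => exact .rfind ih

theorem RecursiveInFn.bind_total {O : ℕ → ℕ} {g : ℕ →. ℕ} (hg : RecursiveInFn O g) {f : ℕ → ℕ}
    (hf : RecursiveInFn O fun n => Part.some (f n)) :
    RecursiveInFn O fun n => g (f n) :=
  (RecursiveInFn.comp hg hf).of_eq' fun n => Part.bind_some (f n) g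

theorem RecursiveInFn.of_computable {O : ℕ → ℕ} {f : ℕ → ℕ} (h : Computable f) :
    RecursiveInFn O fun n => Part.some (f n) :=
  RecursiveInFn.of_partrec (Partrec.nat_iff.1 h.partrec)

theorem RecursiveInFn.oracle_comp {O : ℕ → ℕ} {f : ℕ → ℕ}
    (hf : RecursiveInFn O fun n => Part.some (f n)) :
    RecursiveInFn O fun n => Part.some (O (f n)) :=
  (RecursiveInFn.bind_total .oracle hf).of_eq' fun _ => rfl

theorem RecursiveInFn.pair_total {O : ℕ → ℕ} {f g : ℕ → ℕ}
    (hf : RecursiveInFn O fun n => Part.some (f n)) (hg : RecursiveInFn O fun n => Part.some (g n)) :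
    RecursiveInFn O fun n => Part.some (Nat.pair (f n) (g n)) :=
  (RecursiveInFn.pair hf hg).of_eq' fun n => by simp [Seq.seq]

/-! ### The decision function -/

def dfun (enum : ℕ → ℕ × ℕ) (q : ℕ) : ℕ :=
  cond ((decide ((enum q.unpair.2).1 = q.unpair.1.unpair.1)) &&
    (Nat.rec true
      (fun y IH => IH && !decide (enum y = (q.unpair.1.unpair.1, (enum q.unpair.2).2)))
      q.unpair.1.unpair.2)) 0 1

theorem dfun_computable {enum : ℕ → ℕ × ℕ} (henum : Computable enum) :
    Computable (dfun enum) := by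
  have hn : Computable fun q : ℕ => q.unpair.1.unpair.1 :=
    (Primrec.fst.comp (Primrec.unpair.comp (Primrec.fst.comp Primrec.unpair))).to_comp
  have hs : Computable fun q : ℕ => q.unpair.1.unpair.2 :=
    (Primrec.snd.comp (Primrec.unpair.comp (Primrec.fst.comp Primrec.unpair))).to_comp
  have ht : Computable fun q : ℕ => q.unpair.2 :=
    (Primrec.snd.comp Primrec.unpair).to_comp
  have henumt : Computable fun q : ℕ => enum q.unpair.2 := henum.comp ht
  have hb1 : Computable fun q : ℕ => decide ((enum q.unpair.2).1 = q.unpair.1.unpair.1) :=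
    Primrec.eq.decide.to_comp.comp (Computable.fst.comp henumt) hn
  have htarget : Computable fun q : ℕ => (q.unpair.1.unpair.1, (enum q.unpair.2).2) :=
    Computable.pair hn (Computable.snd.comp henumt)
  have hstep : Computable₂ (fun (q : ℕ) (p : ℕ × Bool) =>
      p.2 && !decide (enum p.1 = (q.unpair.1.unpair.1, (enum q.unpair.2).2))) :=
    (Primrec.and.to_comp.comp
      (Computable.snd.comp Computable.snd)
      ((Primrec.not.to_comp).comp
        (Primrec.eq.decide.to_comp.comp (henum.comp (Computable.fst.comp Computable.snd))
          (htarget.comp Computable.fst)))).to₂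
  have hb2 := Computable.nat_rec hs (Computable.const true) hstep
  exact (Computable.cond (Primrec.and.to_comp.comp hb1 hb2) (Computable.const 0)
    (Computable.const 1)).of_eq fun q => rfl

theorem dfun_eq_zero {enum : ℕ → ℕ × ℕ} {n s t : ℕ} :
    dfun enum (Nat.pair (Nat.pair n s) t) = 0 ↔
      ((enum t).1 = n ∧ ∀ t' < s, enum t' ≠ (n, (enum t).2)) := by
  have key : ∀ s' : ℕ, (Nat.rec true
      (fun y IH => IH && !decide (enum y = (n, (enum t).2))) s' : Bool) = true ↔
      ∀ t' < s', enum t' ≠ (n, (enum t).2) := by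
    intro s'
    induction s' with
    | zero => simp
    | succ k ih =>
      simp only [Bool.and_eq_true, ih, Bool.not_eq_true', decide_eq_false_iff_not,
        Nat.lt_succ_iff_lt_or_eq]
      constructor
      · rintro ⟨h1, h2⟩ t' (h | rfl)
        · exact h1 t' h
        · exact h2
      · intro h
        exact ⟨fun t' ht' => h t' (Or.inl ht'), h k (Or.inr rfl)⟩
  unfold dfun
  simp only [Nat.unpair_pair]
  rcases hc : ((decide ((enum t).1 = n)) &&
      (Nat.rec true (fun y IH => IH && !decide (enum y = (n, (enum t).2))) s : Bool)) with _ | _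
  · simp only [hc, cond_false]
    rw [Bool.and_eq_false_iff] at hc
    constructor
    · intro h; exact absurd h one_ne_zero
    · rintro ⟨h1, h2⟩
      rcases hc with hc | hc
      · simp [h1] at hc
      · exact absurd ((key s).2 h2) (by simp [hc])
  · simp only [hc, cond_true, true_iff]
    rw [Bool.and_eq_true, decide_eq_true_eq] at hc
    exact ⟨hc.1, (key s).1 hc.2⟩

/-! ### Arithmetic lemmas about the enumeration -/

theorem exists_bound {enum : ℕ → ℕ × ℕ} {i : ℕ} (h : (Aset enum i).Finite) :
    ∃ s, ∀ x ∈ Aset enum i, ∃ t < s, enum t = (i, x) := by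
  classical
  have himg : ((fun x => sInf {t | enum t = (i, x)}) '' (Aset enum i)).Finite := h.image _
  obtain ⟨s0, hs0⟩ := himg.bddAbove
  refine ⟨s0 + 1, fun x hx => ?_⟩
  have hne : {t | enum t = (i, x)}.Nonempty := hx
  have hmem : sInf {t | enum t = (i, x)} ∈ {t | enum t = (i, x)} := Nat.sInf_mem hne
  refine ⟨sInf {t | enum t = (i, x)}, ?_, hmem⟩
  have := hs0 (Set.mem_image_of_mem _ hx)
  omega

theorem S_nonempty (enum : ℕ → ℕ × ℕ) (n : ℕ) :
    ∃ s, s ∈ {s | ∀ i ≤ n, (Aset enum i).Finite →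
      ∀ x ∈ Aset enum i, ∃ t < s, enum t = (i, x)} := by
  classical
  induction n with
  | zero =>
    by_cases h : (Aset enum 0).Finite
    · obtain ⟨s, hs⟩ := exists_bound h
      exact ⟨s, fun i hi hfin => by simpa [Nat.le_zero.1 hi] using hs⟩
    · exact ⟨0, fun i hi hfin => by simp [Nat.le_zero.1 hi] at hfin; exact absurd hfin h⟩
  | succ k ih =>
    obtain ⟨s1, hs1⟩ := ih
    by_cases h : (Aset enum (k + 1)).Finite
    · obtain ⟨s2, hs2⟩ := exists_bound h
      refine ⟨max s1 s2, fun i hi hfin x hx => ?_⟩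
      rcases Nat.le_succ_iff.1 hi with hi' | rfl
      · obtain ⟨t, ht, he⟩ := hs1 i hi' hfin x hx
        exact ⟨t, lt_of_lt_of_le ht (le_max_left _ _), he⟩
      · obtain ⟨t, ht, he⟩ := hs2 x hx
        exact ⟨t, lt_of_lt_of_le ht (le_max_right _ _), he⟩
    · refine ⟨s1, fun i hi hfin x hx => ?_⟩
      rcases Nat.le_succ_iff.1 hi with hi' | rfl
      · exact hs1 i hi' hfin x hx
      · exact absurd hfin h

theorem finite_iff_test {enum : ℕ → ℕ × ℕ} {f b : ℕ → ℕ} {N n : ℕ}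
    (hf : ∀ n, f n = sInf {s | ∀ i ≤ n, (Aset enum i).Finite →
      ∀ x ∈ Aset enum i, ∃ t < s, enum t = (i, x)})
    (hN : ∀ x, N ≤ x → f x ≤ b x) (hn : N ≤ n) :
    (Aset enum n).Finite ↔
      ¬ ∃ t, (enum t).1 = n ∧ ∀ t' < b n, enum t' ≠ (n, (enum t).2) := by
  constructor
  · rintro hfin ⟨t, h1, h2⟩
    have hmem : f n ∈ {s | ∀ i ≤ n, (Aset enum i).Finite →
        ∀ x ∈ Aset enum i, ∃ t < s, enum t = (i, x)} := by
      rw [hf n]; exact Nat.sInf_mem (S_nonempty enum n)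
    have hx : (enum t).2 ∈ Aset enum n := ⟨t, by rw [← h1]⟩
    obtain ⟨t', ht', he⟩ := hmem n le_rfl hfin _ hx
    exact h2 t' (lt_of_lt_of_le ht' (hN n hn)) he
  · intro h
    push_neg at h
    have hsub : Aset enum n ⊆ (fun t' => (enum t').2) '' (Set.Iio (b n)) := by
      rintro x ⟨t, ht⟩
      have h1 : (enum t).1 = n := by rw [ht]
      obtain ⟨t', ht', he⟩ := h t h1
      have hx2 : (enum t).2 = x := by rw [ht]
      refine ⟨t', ht', ?_⟩
      show (enum t').2 = x
      rw [he, ← hx2]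
    exact ((Set.finite_Iio _).image _).subset hsub

/-- Let (A_n) be a uniformly c.e. sequence (one set receiving one element
at each stage) with {n : A_n finite} ≡_T 0'', and let f(n) be the least stage by which
all finite sets among A₀,…,A_n have been completely enumerated.  If b dominates f,
then 0'' ≤_T b ⊕ 0'. -/
theorem stmt13 (enum : ℕ → ℕ × ℕ) (henum : Computable enum)
    (f b : ℕ → ℕ)
    (hf : ∀ n, f n = sInf {s | ∀ i ≤ n, (Aset enum i).Finite →
      ∀ x ∈ Aset enum i, ∃ t < s, enum t = (i, x)})
    (hequiv₁ : RecursiveInFn (chi {n | (Aset enum n).Finite})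
      (fun n => Part.some (chi ZeroJumpJump n)))
    (hequiv₂ : RecursiveInFn (chi ZeroJumpJump)
      (fun n => Part.some (chi {n | (Aset enum n).Finite} n)))
    (hdom : ∃ N, ∀ x, N ≤ x → f x ≤ b x) :
    RecursiveInFn (funJoin b (chi ZeroJump)) (fun n => Part.some (chi ZeroJumpJump n)) := by
  classical
  obtain ⟨N, hN⟩ := hdom
  set O : ℕ → ℕ := funJoin b (chi ZeroJump) with hO
  -- the partial recursive search function and its code
  set G : ℕ →. ℕ :=
    fun a => Nat.rfind fun t => (fun m => m = 0) <$> (dfun enum (Nat.pair a t) : Part ℕ) with hG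
  have hGp : Nat.Partrec G :=
    Nat.Partrec.rfind (Partrec.nat_iff.1 (dfun_computable henum).partrec)
  obtain ⟨c, hc⟩ := Nat.Partrec.Code.exists_code.1 hGp
  set e : ℕ := Encodable.encode c with he
  have hGdom : ∀ a, (G a).Dom ↔ ∃ t, dfun enum (Nat.pair a t) = 0 := by
    intro a
    rw [hG]
    refine Nat.rfind_dom.trans ?_
    constructor
    · rintro ⟨t, h1, _⟩
      exact ⟨t, by simpa using h1⟩
    · rintro ⟨t, h1⟩
      exact ⟨t, by simpa using h1, fun {_} _ => trivial⟩
  have hmemZJ : ∀ k, (Nat.pair e k ∈ ZeroJump) ↔ (G k).Dom := by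
    intro k
    show (Nat.Partrec.Code.eval _ _).Dom ↔ _
    rw [Nat.unpair_pair]
    simp only []
    rw [he, Denumerable.ofNat_encode, hc]
  -- the key value computation for n ≥ N
  have hval : ∀ n, N ≤ n →
      chi {m | (Aset enum m).Finite} n = 1 - chi ZeroJump (Nat.pair e (Nat.pair n (b n))) := by
    intro n hn
    have hiff : (Aset enum n).Finite ↔
        ¬ (Nat.pair e (Nat.pair n (b n)) ∈ ZeroJump) := by
      rw [hmemZJ, hGdom, finite_iff_test hf hN hn]
      constructor
      · intro h ⟨t, ht⟩
        exact h ⟨t, dfun_eq_zero.1 ht⟩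
      · intro h ⟨t, ht⟩
        exact h ⟨t, dfun_eq_zero.2 ht⟩
    by_cases hfin : (Aset enum n).Finite
    · have h1 : chi {m | (Aset enum m).Finite} n = 1 := if_pos hfin
      have h2 : chi ZeroJump (Nat.pair e (Nat.pair n (b n))) = 0 := if_neg (hiff.1 hfin)
      rw [h1, h2]
    · have h1 : chi {m | (Aset enum m).Finite} n = 0 := if_neg hfin
      have h2 : chi ZeroJump (Nat.pair e (Nat.pair n (b n))) = 1 := by
        refine if_pos ?_
        by_contra hmem
        exact hfin (hiff.2 hmem)
      rw [h1, h2]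
  -- oracle access to b and chi ZeroJump
  have hOe : ∀ n, O (2 * n) = b n := by
    intro n
    show (if (2 * n) % 2 = 0 then b (2 * n / 2) else chi ZeroJump (2 * n / 2)) = b n
    rw [Nat.mul_mod_right, if_pos rfl, Nat.mul_div_cancel_left _ (by norm_num : 0 < 2)]
  have hOo : ∀ k, O (2 * k + 1) = chi ZeroJump k := by
    intro k
    show (if (2 * k + 1) % 2 = 0 then b ((2 * k + 1) / 2) else chi ZeroJump ((2 * k + 1) / 2))
      = chi ZeroJump k
    have h1 : (2 * k + 1) % 2 = 1 := by omega
    have h2 : (2 * k + 1) / 2 = k := by omega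
    rw [h1, h2]
    simp
  -- the final table and postprocessing function
  set L : List ℕ := (List.range N).map (chi {m | (Aset enum m).Finite}) with hL
  set F₂ : ℕ → ℕ := fun m => if m.unpair.1 < N then L.getD m.unpair.1 0 else 1 - m.unpair.2
    with hF₂def
  have hF₂ : Computable F₂ := by
    apply Primrec.to_comp
    exact Primrec.ite
      (Primrec.nat_lt.comp (Primrec.fst.comp Primrec.unpair) (Primrec.const N))
      ((Primrec.list_getD 0).comp (Primrec.const L) (Primrec.fst.comp Primrec.unpair))
      (Primrec.nat_sub.comp (Primrec.const 1) (Primrec.snd.comp Primrec.unpair))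
  -- assembling the relative algorithm
  have hid : RecursiveInFn O fun n => Part.some n := RecursiveInFn.of_computable Computable.id
  have h1 : RecursiveInFn O fun n => Part.some (O (2 * n)) :=
    RecursiveInFn.oracle_comp (RecursiveInFn.of_computable
      ((Primrec.nat_mul.comp (Primrec.const 2) Primrec.id).to_comp))
  have h2 : RecursiveInFn O fun n => Part.some (Nat.pair n (O (2 * n))) :=
    RecursiveInFn.pair_total hid h1
  have hk1 : Computable fun m => 2 * Nat.pair e m + 1 :=
    (Primrec.succ.comp (Primrec.nat_mul.comp (Primrec.const 2)
      (Primrec₂.natPair.comp (Primrec.const e) Primrec.id))).to_comp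
  have h3 : RecursiveInFn O fun n =>
      Part.some (2 * Nat.pair e (Nat.pair n (O (2 * n))) + 1) :=
    RecursiveInFn.bind_total (RecursiveInFn.of_computable hk1) h2
  have h4 : RecursiveInFn O fun n =>
      Part.some (O (2 * Nat.pair e (Nat.pair n (O (2 * n))) + 1)) :=
    RecursiveInFn.oracle_comp h3
  have h5 : RecursiveInFn O fun n =>
      Part.some (Nat.pair n (O (2 * Nat.pair e (Nat.pair n (O (2 * n))) + 1))) :=
    RecursiveInFn.pair_total hid h4
  have h6 : RecursiveInFn O fun n =>
      Part.some (F₂ (Nat.pair n (O (2 * Nat.pair e (Nat.pair n (O (2 * n))) + 1)))) :=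
    RecursiveInFn.bind_total (RecursiveInFn.of_computable hF₂) h5
  have h7 : RecursiveInFn O fun n => Part.some (chi {m | (Aset enum m).Finite} n) := by
    refine h6.of_eq' fun n => ?_
    congr 1
    rw [hF₂def]
    simp only [Nat.unpair_pair]
    by_cases hn : n < N
    · rw [if_pos hn, hL]
      rw [List.getD_eq_getElem?_getD, List.getElem?_map, List.getElem?_range hn]
      rfl
    · rw [if_neg hn, hOe, hOo, hval n (le_of_not_gt hn)]
  exact hequiv₁.trans' h7
end

section
/- Let T ⊆ 2^{<ω} be a subtree such that for every σ ∈ T with T(σ) infinite, σ is an initial segment of some τ_n^ρ (with τ_n^ρ = 0^{a(0)}*ρ(0)*⋯*0^{a(n)}*ρ(n) for some n and |ρ| = n+1), and every node of the form (τ_n^ρ)' is a branching node. Then T has no isolated paths. -/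
/-- τ a i σ = 0^{a(i)} * σ(0) * 0^{a(i+1)} * σ(1) * ⋯; so `tauStr a 0 ρ` is τ_n^ρ for
|ρ| = n+1. -/
def tauStr (a : ℕ → ℕ) : ℕ → List Bool → List Bool
  | _, [] => []
  | i, b :: rest => List.replicate (a i) false ++ [b] ++ tauStr a (i + 1) rest

lemma tauStr_append (a : ℕ → ℕ) (b : Bool) :
    ∀ (ρ : List Bool) (i : ℕ),
      tauStr a i (ρ ++ [b]) = tauStr a i ρ ++ (List.replicate (a (i + ρ.length)) false ++ [b])
  | [], i => by simp [tauStr]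
  | c :: rest, i => by
    simp only [List.cons_append, tauStr, List.length_cons]
    rw [show i + (rest.length + 1) = i + 1 + rest.length from by omega]
    simp [tauStr_append a b rest (i + 1)]

/-- If every σ ∈ T with T(σ) infinite is an initial segment of some
τ_n^ρ, and every (τ_n^ρ)' (drop the last symbol) is a branching node of T, then T has
no isolated paths: above every node with infinitely many extensions there is a
branching node. -/
theorem stmt16 (a : ℕ → ℕ) (T : Set (List Bool))
    (hsub : ∀ σ ∈ T, ∀ τ : List Bool, τ <+: σ → τ ∈ T)
    (h1 : ∀ σ ∈ T, {τ ∈ T | σ <+: τ}.Infinite →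
      ∃ (n : ℕ) (ρ : List Bool), ρ.length = n + 1 ∧ σ <+: tauStr a 0 ρ)
    (h2 : ∀ (n : ℕ) (ρ : List Bool), ρ.length = n + 1 →
      (tauStr a 0 ρ).dropLast ∈ T ∧ Branching T ((tauStr a 0 ρ).dropLast)) :
    ∀ σ ∈ T, {τ ∈ T | σ <+: τ}.Infinite → ∃ β ∈ T, σ <+: β ∧ Branching T β := by
  intro σ hσ hinf
  obtain ⟨n, ρ, hlen, t, ht⟩ := h1 σ hσ hinf
  rcases eq_or_ne t [] with rfl | htne
  · -- σ = tauStr a 0 ρ; extend ρ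
    simp only [List.append_nil] at ht
    refine ⟨(tauStr a 0 (ρ ++ [true])).dropLast, (h2 (n + 1) (ρ ++ [true]) (by simp [hlen])).1,
      ?_, (h2 (n + 1) (ρ ++ [true]) (by simp [hlen])).2⟩
    rw [tauStr_append, ← List.append_assoc, List.dropLast_concat, ht]
    exact ⟨_, rfl⟩
  · -- σ is a proper prefix, so a prefix of dropLast
    refine ⟨(tauStr a 0 ρ).dropLast, (h2 n ρ hlen).1, ?_, (h2 n ρ hlen).2⟩
    rw [← ht, List.dropLast_append_of_ne_nil htne]
    exact ⟨_, rfl⟩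
end
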